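/- arXiv:1909.04853 — 4 statements merged into one kernel-verified Lean document; each statement's English description precedes it below -/
import Mathlib

section
/- Two-sided √n asymptotics of trigonometric sums (Lemma C.3). For all fixed real constants a > 0, b > 0 and every real p ≥ 1, there exist constants 0 < c ≤ C < ∞ and N ∈ ℕ such that for all n ≥ N: c·n^{1/2} ≤ ∑_{j=1}^n ( a + 2bn(1 − cos(jπ/(n+1))) )^{−p} ≤ C·n^{1/2}. -/
open Real Filter

private lemma rpow_anti' {x y p : ℝ} (hx : 0 < x) (hxy : x ≤ y) (hp : 0 ≤ p) :
    y ^ (-p) ≤ x ^ (-p) := by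
  rw [Real.rpow_neg hx.le, Real.rpow_neg (hx.trans_le hxy).le]
  exact inv_anti₀ (Real.rpow_pos_of_pos hx p) (Real.rpow_le_rpow hx.le hxy hp)

private lemma one_sub_cos_bounds {θ : ℝ} (h0 : 0 ≤ θ) (hπ : θ ≤ π) :
    2 / π ^ 2 * θ ^ 2 ≤ 1 - Real.cos θ ∧ 1 - Real.cos θ ≤ θ ^ 2 / 2 := by
  have hpi := Real.pi_pos
  have hkey : 1 - Real.cos θ = 2 * Real.sin (θ / 2) ^ 2 := by
    have h := Real.cos_two_mul (θ / 2)
    rw [show 2 * (θ / 2) = θ by ring] at h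
    nlinarith [Real.sin_sq_add_cos_sq (θ / 2)]
  have hs0 : 0 ≤ Real.sin (θ / 2) :=
    Real.sin_nonneg_of_nonneg_of_le_pi (by linarith) (by linarith)
  constructor
  · have hms := Real.mul_le_sin (x := θ / 2) (by linarith) (by linarith)
    have h1 : θ / π ≤ Real.sin (θ / 2) := by
      have : 2 / π * (θ / 2) = θ / π := by field_simp
      linarith [this ▸ hms]
    have h2 : (θ / π) ^ 2 ≤ Real.sin (θ / 2) ^ 2 :=
      pow_le_pow_left₀ (by positivity) h1 2
    rw [div_pow] at h2
    have h3 : 2 / π ^ 2 * θ ^ 2 = 2 * (θ ^ 2 / π ^ 2) := by ring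
    rw [hkey, h3]
    linarith
  · have hs := Real.sin_le (x := θ / 2) (by linarith)
    nlinarith [hs0]

private lemma arg_bounds {b : ℝ} (hb : 0 < b) {n j : ℕ} (hn : 1 ≤ n) (hj1 : 1 ≤ j)
    (hjn : j ≤ n) :
    b * (j : ℝ) ^ 2 / n ≤ 2 * b * (n : ℝ) * (1 - Real.cos ((j : ℝ) * π / ((n : ℝ) + 1))) ∧
    2 * b * (n : ℝ) * (1 - Real.cos ((j : ℝ) * π / ((n : ℝ) + 1))) ≤ b * π ^ 2 * (j : ℝ) ^ 2 / n := by
  have hpi := Real.pi_pos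
  have hx1 : (1 : ℝ) ≤ (n : ℝ) := by exact_mod_cast hn
  have hy1 : (1 : ℝ) ≤ (j : ℝ) := by exact_mod_cast hj1
  have hyx : (j : ℝ) ≤ (n : ℝ) := by exact_mod_cast hjn
  set x := (n : ℝ)
  set y := (j : ℝ)
  set θ := y * π / (x + 1) with hθ
  have hθ0 : 0 ≤ θ := by positivity
  have hθπ : θ ≤ π := by
    rw [hθ, div_le_iff₀ (by linarith)]
    nlinarith
  obtain ⟨hlo, hhi⟩ := one_sub_cos_bounds hθ0 hθπ
  have hθsq : θ ^ 2 = y ^ 2 * π ^ 2 / (x + 1) ^ 2 := by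
    rw [hθ, div_pow]; ring
  constructor
  · have e1 : 2 * b * x * (2 / π ^ 2 * θ ^ 2) = 4 * b * x * y ^ 2 / (x + 1) ^ 2 := by
      rw [hθsq]; field_simp; ring
    have e2 : b * y ^ 2 / x ≤ 4 * b * x * y ^ 2 / (x + 1) ^ 2 := by
      rw [div_le_div_iff₀ (by linarith) (by positivity)]
      nlinarith [mul_le_mul_of_nonneg_left (show (x + 1) ^ 2 ≤ 4 * x ^ 2 by nlinarith)
        (show (0 : ℝ) ≤ b * y ^ 2 by positivity)]
    have e3 : 2 * b * x * (2 / π ^ 2 * θ ^ 2) ≤ 2 * b * x * (1 - Real.cos θ) :=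
      mul_le_mul_of_nonneg_left hlo (by positivity)
    linarith [e1 ▸ e3]
  · have e1 : 2 * b * x * (θ ^ 2 / 2) = b * x * y ^ 2 * π ^ 2 / (x + 1) ^ 2 := by
      rw [hθsq]; field_simp
    have e2 : b * x * y ^ 2 * π ^ 2 / (x + 1) ^ 2 ≤ b * π ^ 2 * y ^ 2 / x := by
      rw [div_le_div_iff₀ (by positivity) (by linarith)]
      nlinarith [mul_le_mul_of_nonneg_left (show x ^ 2 ≤ (x + 1) ^ 2 by nlinarith)
        (show (0 : ℝ) ≤ b * y ^ 2 * π ^ 2 by positivity)]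
    have e3 : 2 * b * x * (1 - Real.cos θ) ≤ 2 * b * x * (θ ^ 2 / 2) :=
      mul_le_mul_of_nonneg_left hhi (by positivity)
    linarith [e1 ▸ e3]

private lemma sum_inv_sq_tail (K : ℕ) (hK : 1 ≤ K) :
    ∀ n : ℕ, K ≤ n → ∑ j ∈ Finset.Icc (K + 1) n, ((j : ℝ) ^ 2)⁻¹ ≤ ((K : ℝ))⁻¹ - ((n : ℝ))⁻¹ := by
  intro n hn
  induction n, hn using Nat.le_induction with
  | base =>
    rw [Finset.Icc_eq_empty (by omega)]
    simp
  | succ n hn ih =>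
    rw [Finset.sum_Icc_succ_top (by omega)]
    have hn1 : (1 : ℝ) ≤ (n : ℝ) := by exact_mod_cast hK.trans hn
    have key : (((n : ℝ) + 1) ^ 2)⁻¹ ≤ ((n : ℝ))⁻¹ - ((n : ℝ) + 1)⁻¹ := by
      have e : ((n : ℝ))⁻¹ - ((n : ℝ) + 1)⁻¹ = ((n : ℝ) * ((n : ℝ) + 1))⁻¹ := by
        field_simp; ring
      rw [e]
      exact inv_anti₀ (by nlinarith) (by nlinarith)
    push_cast
    linarith

set_option maxHeartbeats 1000000 in
/-- **Two-sided `√n` asymptotics of trigonometric sums (Lemma C.3).** For all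
`a > 0`, `b > 0` and `p ≥ 1` there are constants `0 < c ≤ C < ∞` and `N` such that
for all `n ≥ N`,
`c n^{1/2} ≤ ∑_{j=1}^n (a + 2bn(1 − cos(jπ/(n+1))))^{-p} ≤ C n^{1/2}`. -/
theorem trig_sum_two_sided_sqrt_asymptotics
    (a b p : ℝ) (ha : 0 < a) (hb : 0 < b) (hp : 1 ≤ p) :
    ∃ (c C : ℝ) (N : ℕ), 0 < c ∧ c ≤ C ∧ ∀ n : ℕ, N ≤ n →
      c * (n : ℝ) ^ ((1 : ℝ) / 2) ≤
        (∑ j ∈ Finset.Icc 1 n,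
          (a + 2 * b * (n : ℝ) * (1 - Real.cos ((j : ℝ) * π / ((n : ℝ) + 1)))) ^ (-p)) ∧
      (∑ j ∈ Finset.Icc 1 n,
          (a + 2 * b * (n : ℝ) * (1 - Real.cos ((j : ℝ) * π / ((n : ℝ) + 1)))) ^ (-p)) ≤
        C * (n : ℝ) ^ ((1 : ℝ) / 2) := by
  have hpi := Real.pi_pos
  have hp0 : (0 : ℝ) ≤ p := by linarith
  have habπ : (0 : ℝ) < a + b * π ^ 2 := by positivity
  refine ⟨(a + b * π ^ 2) ^ (-p) / 2, a ^ (-p) * (1 + 2 * a / b), 4, by positivity, ?_, ?_⟩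
  · have h1 : (a + b * π ^ 2) ^ (-p) ≤ a ^ (-p) := rpow_anti' ha (by nlinarith) hp0
    have h2 : (0 : ℝ) ≤ 2 * a / b := by positivity
    have h3 : (0 : ℝ) ≤ a ^ (-p) := Real.rpow_nonneg ha.le _
    nlinarith [Real.rpow_pos_of_pos habπ (-p)]
  · intro n hn
    have hn1 : 1 ≤ n := by omega
    have hx1 : (1 : ℝ) ≤ (n : ℝ) := by exact_mod_cast hn1
    set K := Nat.sqrt n with hKdef
    have hK2 : 2 ≤ K := Nat.le_sqrt.mpr (by omega)
    have hKn : K ≤ n := Nat.sqrt_le_self n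
    have hKsq : ((K : ℝ)) ^ 2 ≤ (n : ℝ) := by exact_mod_cast Nat.sqrt_le' n
    have hk1 : (1 : ℝ) ≤ (K : ℝ) := by exact_mod_cast (by omega : 1 ≤ K)
    have hk0 : (0 : ℝ) < (K : ℝ) := by linarith
    set s := Real.sqrt n with hsdef
    have hs0 : 0 ≤ s := Real.sqrt_nonneg _
    have hss : s * s = (n : ℝ) := Real.mul_self_sqrt (by positivity)
    have hks : (K : ℝ) ≤ s := by
      have := Real.sqrt_le_sqrt hKsq
      rwa [Real.sqrt_sq hk0.le] at this
    have hsk : s ≤ 2 * (K : ℝ) := by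
      have h1 : (n : ℝ) ≤ ((K : ℝ) + 1) ^ 2 := by
        have := Nat.lt_succ_sqrt n
        have : (n : ℝ) < ((K : ℝ) + 1) * ((K : ℝ) + 1) := by exact_mod_cast this
        nlinarith
      have h2 := Real.sqrt_le_sqrt h1
      rw [Real.sqrt_sq (by linarith)] at h2
      linarith
    have hrpow : (n : ℝ) ^ ((1 : ℝ) / 2) = s := (Real.sqrt_eq_rpow (n : ℝ)).symm
    -- base nonnegativity
    have hbase : ∀ j : ℕ,
        0 ≤ a + 2 * b * (n : ℝ) * (1 - Real.cos ((j : ℝ) * π / ((n : ℝ) + 1))) := by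
      intro j
      have hc := Real.cos_le_one ((j : ℝ) * π / ((n : ℝ) + 1))
      have : (0 : ℝ) ≤ 2 * b * (n : ℝ) := by positivity
      nlinarith
    set T : ℕ → ℝ :=
      fun j => (a + 2 * b * (n : ℝ) * (1 - Real.cos ((j : ℝ) * π / ((n : ℝ) + 1)))) ^ (-p) with hT
    have hq : (0 : ℝ) < (a + b * π ^ 2) ^ (-p) := Real.rpow_pos_of_pos habπ _
    have hr : (0 : ℝ) < a ^ (-p) := Real.rpow_pos_of_pos ha _
    constructor
    · -- lower bound
      have hsub : Finset.Icc 1 K ⊆ Finset.Icc 1 n := Finset.Icc_subset_Icc_right hKn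
      have hS1 : ∑ j ∈ Finset.Icc 1 K, T j ≤ ∑ j ∈ Finset.Icc 1 n, T j :=
        Finset.sum_le_sum_of_subset_of_nonneg hsub
          (fun i _ _ => Real.rpow_nonneg (hbase i) _)
      have hS2 : (Finset.Icc 1 K).card • ((a + b * π ^ 2) ^ (-p)) ≤ ∑ j ∈ Finset.Icc 1 K, T j := by
        apply Finset.card_nsmul_le_sum
        intro j hj
        rw [Finset.mem_Icc] at hj
        obtain ⟨hlo, hhi⟩ := arg_bounds hb hn1 hj.1 (hj.2.trans hKn)
        have hjK : ((j : ℝ)) ^ 2 ≤ (n : ℝ) := by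
          have : ((j : ℝ)) ≤ (K : ℝ) := by exact_mod_cast hj.2
          nlinarith
        have harg : a + 2 * b * (n : ℝ) * (1 - Real.cos ((j : ℝ) * π / ((n : ℝ) + 1)))
            ≤ a + b * π ^ 2 := by
          have h4 : b * π ^ 2 * (j : ℝ) ^ 2 / n ≤ b * π ^ 2 := by
            rw [div_le_iff₀ (by linarith)]
            exact mul_le_mul_of_nonneg_left hjK (by positivity)
          linarith
        have hpos : 0 < a + 2 * b * (n : ℝ) * (1 - Real.cos ((j : ℝ) * π / ((n : ℝ) + 1))) := by
          have hj2 : (0 : ℝ) < b * (j : ℝ) ^ 2 / n := by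
            have : (1 : ℝ) ≤ (j : ℝ) := by exact_mod_cast hj.1
            positivity
          linarith
        exact rpow_anti' hpos harg hp0
      rw [Nat.card_Icc, nsmul_eq_mul] at hS2
      have hcard : ((K + 1 - 1 : ℕ) : ℝ) = (K : ℝ) := by norm_num
      rw [hcard] at hS2
      rw [hrpow]
      calc (a + b * π ^ 2) ^ (-p) / 2 * s
          ≤ (a + b * π ^ 2) ^ (-p) / 2 * (2 * (K : ℝ)) := by
            apply mul_le_mul_of_nonneg_left hsk (by positivity)
        _ = (K : ℝ) * (a + b * π ^ 2) ^ (-p) := by ring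
        _ ≤ ∑ j ∈ Finset.Icc 1 K, T j := hS2
        _ ≤ ∑ j ∈ Finset.Icc 1 n, T j := hS1
    · -- upper bound
      have hstep1 : ∑ j ∈ Finset.Icc 1 n, T j
          ≤ ∑ j ∈ Finset.Icc 1 n, (a + b * (j : ℝ) ^ 2 / n) ^ (-p) := by
        apply Finset.sum_le_sum
        intro j hj
        rw [Finset.mem_Icc] at hj
        obtain ⟨hlo, _⟩ := arg_bounds hb hn1 hj.1 hj.2
        have hj1 : (1 : ℝ) ≤ (j : ℝ) := by exact_mod_cast hj.1
        have hpos : (0 : ℝ) < a + b * (j : ℝ) ^ 2 / n := by positivity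
        exact rpow_anti' hpos (by linarith) hp0
      have hsplit : ∑ j ∈ Finset.Icc 1 n, (a + b * (j : ℝ) ^ 2 / n) ^ (-p)
          = (∑ j ∈ Finset.Ioc 0 K, (a + b * (j : ℝ) ^ 2 / n) ^ (-p))
            + ∑ j ∈ Finset.Ioc K n, (a + b * (j : ℝ) ^ 2 / n) ^ (-p) := by
        rw [show Finset.Icc 1 n = Finset.Ioc 0 n from Finset.Icc_add_one_left_eq_Ioc 0 n]
        exact (Finset.sum_Ioc_consecutive _ (Nat.zero_le K) hKn).symm
      have hpart1 : ∑ j ∈ Finset.Ioc 0 K, (a + b * (j : ℝ) ^ 2 / n) ^ (-p)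
          ≤ (K : ℝ) * a ^ (-p) := by
        have := Finset.sum_le_card_nsmul (Finset.Ioc 0 K)
          (fun j => (a + b * (j : ℝ) ^ 2 / n) ^ (-p)) (a ^ (-p)) ?_
        · rwa [Nat.card_Ioc, Nat.sub_zero, nsmul_eq_mul] at this
        · intro j _
          refine rpow_anti' ha ?_ hp0
          have : (0 : ℝ) ≤ b * (j : ℝ) ^ 2 / n := by positivity
          linarith
      have hpart2 : ∑ j ∈ Finset.Ioc K n, (a + b * (j : ℝ) ^ 2 / n) ^ (-p)
          ≤ a ^ (-p) * (a * n / b) * ((K : ℝ))⁻¹ := by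
        have hterm : ∀ j ∈ Finset.Ioc K n,
            (a + b * (j : ℝ) ^ 2 / n) ^ (-p)
              ≤ a ^ (-p) * (a * n / b) * (((j : ℝ) ^ 2)⁻¹) := by
          intro j hj
          rw [Finset.mem_Ioc] at hj
          have hj1 : (1 : ℝ) ≤ (j : ℝ) := by exact_mod_cast (by omega : 1 ≤ j)
          have hu1 : (1 : ℝ) ≤ 1 + b * (j : ℝ) ^ 2 / (a * n) := by
            have : (0 : ℝ) ≤ b * (j : ℝ) ^ 2 / (a * n) := by positivity
            linarith
          have hfac : a + b * (j : ℝ) ^ 2 / n = a * (1 + b * (j : ℝ) ^ 2 / (a * n)) := by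
            field_simp
          rw [hfac, Real.mul_rpow ha.le (by linarith)]
          have h1 : (1 + b * (j : ℝ) ^ 2 / (a * n)) ^ (-p)
              ≤ (1 + b * (j : ℝ) ^ 2 / (a * n)) ^ (-1 : ℝ) :=
            Real.rpow_le_rpow_of_exponent_le hu1 (by linarith)
          have h2 : (1 + b * (j : ℝ) ^ 2 / (a * n)) ^ (-1 : ℝ)
              ≤ (b * (j : ℝ) ^ 2 / (a * n))⁻¹ := by
            rw [Real.rpow_neg_one]
            exact inv_anti₀ (by positivity) (by linarith)
          have h3 : (b * (j : ℝ) ^ 2 / (a * n))⁻¹ = (a * n / b) * (((j : ℝ) ^ 2)⁻¹) := by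
            field_simp
          calc a ^ (-p) * (1 + b * (j : ℝ) ^ 2 / (a * n)) ^ (-p)
              ≤ a ^ (-p) * ((b * (j : ℝ) ^ 2 / (a * n))⁻¹) := by
                apply mul_le_mul_of_nonneg_left (h1.trans h2) hr.le
            _ = a ^ (-p) * (a * n / b) * (((j : ℝ) ^ 2)⁻¹) := by rw [h3]; ring
        calc ∑ j ∈ Finset.Ioc K n, (a + b * (j : ℝ) ^ 2 / n) ^ (-p)
            ≤ ∑ j ∈ Finset.Ioc K n, a ^ (-p) * (a * n / b) * (((j : ℝ) ^ 2)⁻¹) :=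
              Finset.sum_le_sum hterm
          _ = a ^ (-p) * (a * n / b) * ∑ j ∈ Finset.Ioc K n, ((j : ℝ) ^ 2)⁻¹ := by
              rw [Finset.mul_sum]
          _ ≤ a ^ (-p) * (a * n / b) * ((K : ℝ))⁻¹ := by
              apply mul_le_mul_of_nonneg_left _ (by positivity)
              have htail := sum_inv_sq_tail K (by omega) n hKn
              rw [← Finset.Icc_add_one_left_eq_Ioc]
              have hn0 : (0 : ℝ) < (n : ℝ)⁻¹ := by positivity
              calc ∑ j ∈ Finset.Icc (K + 1) n, ((j : ℝ) ^ 2)⁻¹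
                  ≤ ((K : ℝ))⁻¹ - ((n : ℝ))⁻¹ := htail
                _ ≤ ((K : ℝ))⁻¹ := by linarith
      -- combine
      have hlast : (K : ℝ) * a ^ (-p) + a ^ (-p) * (a * n / b) * ((K : ℝ))⁻¹
          ≤ a ^ (-p) * (1 + 2 * a / b) * s := by
        have hA : (K : ℝ) * a ^ (-p) ≤ a ^ (-p) * s := by
          nlinarith
        have hB : a ^ (-p) * (a * n / b) * ((K : ℝ))⁻¹ ≤ a ^ (-p) * (2 * a / b) * s := by
          have hn2ks : (n : ℝ) ≤ 2 * (K : ℝ) * s := by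
            nlinarith [mul_le_mul_of_nonneg_right hsk hs0]
          have e : a ^ (-p) * (a * (n : ℝ) / b) * ((K : ℝ))⁻¹
              = a ^ (-p) * a * (n : ℝ) / (b * (K : ℝ)) := by
            field_simp
          have e2 : a ^ (-p) * (2 * a / b) * s = 2 * (a ^ (-p) * a) * s / b := by ring
          rw [e, e2, div_le_div_iff₀ (by positivity) hb]
          nlinarith [mul_le_mul_of_nonneg_left hn2ks
            (show (0 : ℝ) ≤ a ^ (-p) * a * b by positivity)]
        linarith [show a ^ (-p) * s + a ^ (-p) * (2 * a / b) * s
            = a ^ (-p) * (1 + 2 * a / b) * s by ring]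
      rw [hrpow]
      calc ∑ j ∈ Finset.Icc 1 n, T j
          ≤ ∑ j ∈ Finset.Icc 1 n, (a + b * (j : ℝ) ^ 2 / n) ^ (-p) := hstep1
        _ = _ + _ := hsplit
        _ ≤ (K : ℝ) * a ^ (-p) + a ^ (-p) * (a * n / b) * ((K : ℝ))⁻¹ :=
            add_le_add hpart1 hpart2
        _ ≤ a ^ (-p) * (1 + 2 * a / b) * s := hlast
end

section
/- Bounds on quadruple products of discrete sine-transform entries (Appendix D). Let n ≥ 2 and p_{ij} := sqrt(2/(n+1))·sin(ijπ/(n+1)) for 1 ≤ i, j ≤ n, and let 1 ≤ s ≠ t ≤ n. Then: (a) ∑_{i ≠ k} p_{is} p_{it} p_{ks} p_{kt} = − ∑_{k=1}^n p_{ks}² p_{kt}², and hence | ∑_{i ≠ k} p_{is} p_{it} p_{ks} p_{kt} | ≤ 3/(2(n+1)); (b) there exists an absolute constant C, independent of n, s and t, such that | ∑ p_{is} p_{it} p_{ks} p_{ut} | ≤ C, where the sum is over all triples (i, k, u) of pairwise distinct indices in {1, …, n}. -/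
open Real

noncomputable section

namespace PaperBvM

/-- Entries of the symmetric discrete sine-transform matrix `P_n`:
`p_{ij} = √(2/(n+1)) sin(ijπ/(n+1))`. -/
def pMat (n i j : ℕ) : ℝ :=
  Real.sqrt (2 / ((n : ℝ) + 1)) * Real.sin ((i : ℝ) * (j : ℝ) * π / ((n : ℝ) + 1))

/-! ### Auxiliary trigonometric sum lemmas -/

lemma cos_sum_telescope (x : ℝ) (n : ℕ) :
    2 * Real.sin (x/2) * ∑ k ∈ Finset.Icc 1 n, Real.cos ((k : ℝ) * x)
      = Real.sin (((n : ℝ) + 1/2) * x) - Real.sin (x/2) := by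
  induction n with
  | zero => simp; ring_nf
  | succ n ih =>
    rw [Finset.sum_Icc_succ_top (by omega)]
    have h1 := Real.sin_add (((n:ℝ)+1)*x) (x/2)
    have h2 := Real.sin_sub (((n:ℝ)+1)*x) (x/2)
    push_cast
    have : ((n:ℝ)+1) * x + x/2 = ((n:ℝ)+1+1/2)*x := by ring
    have h3 : ((n:ℝ)+1) * x - x/2 = ((n:ℝ)+1/2)*x := by ring
    rw [this] at h1; rw [h3] at h2
    rw [mul_add, ih]
    nlinarith [h1, h2]

lemma cosSum (n m : ℕ) (hm1 : 1 ≤ m) (hm2 : m ≤ 4*n) (hm3 : m ≠ 2*(n+1)) :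
    ∑ k ∈ Finset.Icc 1 n, Real.cos ((k : ℝ) * ((m : ℝ) * (π / ((n:ℝ)+1))))
      = if Even m then -1 else 0 := by
  set N : ℝ := (n : ℝ) + 1 with hN
  have hNpos : (0:ℝ) < N := by positivity
  set x : ℝ := (m : ℝ) * (π / N) with hx
  have hNne : N ≠ 0 := ne_of_gt hNpos
  have hy : x / 2 = (m : ℝ) * π / (2 * N) := by rw [hx]; field_simp
  have hypos : 0 < x / 2 := by
    rw [hy]
    have : (0:ℝ) < (m:ℝ) := by exact_mod_cast hm1
    positivity
  have hylt : x / 2 < 2 * π := by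
    rw [hy]
    rw [div_lt_iff₀ (by positivity)]
    have hm : (m : ℝ) < 4 * N := by
      have : (m:ℝ) ≤ 4 * n := by exact_mod_cast hm2
      have : (n:ℝ) < N := by rw [hN]; linarith
      nlinarith [pi_pos]
    nlinarith [pi_pos]
  have hyne : x / 2 ≠ π := by
    rw [hy]
    intro h
    have : (m : ℝ) = 2 * N := by
      field_simp at h
      nlinarith [pi_pos, h]
    rw [hN] at this
    have : m = 2 * (n + 1) := by exact_mod_cast this
    exact hm3 this
  have hsin : Real.sin (x/2) ≠ 0 := by
    rcases lt_trichotomy (x/2) π with h | h | h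
    · exact ne_of_gt (Real.sin_pos_of_pos_of_lt_pi hypos h)
    · exact absurd h hyne
    · have : Real.sin (x/2) < 0 := by
        have h1 : Real.sin (x/2 - π) > 0 :=
          Real.sin_pos_of_pos_of_lt_pi (by linarith) (by linarith)
        have := Real.sin_sub_pi (x/2)
        linarith [this ▸ h1]
      exact ne_of_lt this
  have htel := cos_sum_telescope x n
  have hkey : ((n : ℝ) + 1/2) * x = (m : ℝ) * π - x / 2 := by
    rw [hx, hN]; field_simp; ring
  have hsin2 : Real.sin (((n : ℝ) + 1/2) * x) = -((-1)^m * Real.sin (x/2)) := by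
    rw [hkey, Real.sin_nat_mul_pi_sub]
  rw [hsin2] at htel
  rcases Nat.even_or_odd m with he | ho
  · rw [if_pos he]
    rw [he.neg_one_pow] at htel
    have : 2 * Real.sin (x/2) * ∑ k ∈ Finset.Icc 1 n, Real.cos ((k:ℝ) * x)
        = 2 * Real.sin (x/2) * (-1) := by rw [htel]; ring
    exact mul_left_cancel₀ (by simpa using mul_ne_zero two_ne_zero hsin) this
  · rw [if_neg (Nat.not_even_iff_odd.mpr ho)]
    rw [ho.neg_one_pow] at htel
    have : 2 * Real.sin (x/2) * ∑ k ∈ Finset.Icc 1 n, Real.cos ((k:ℝ) * x)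
        = 2 * Real.sin (x/2) * 0 := by rw [htel]; ring
    exact mul_left_cancel₀ (by simpa using mul_ne_zero two_ne_zero hsin) this

lemma cosSum_top (n : ℕ) :
    ∑ k ∈ Finset.Icc 1 n, Real.cos ((k : ℝ) * ((((2*(n+1)) : ℕ) : ℝ) * (π / ((n:ℝ)+1))))
      = n := by
  have : ∀ k ∈ Finset.Icc 1 n,
      Real.cos ((k : ℝ) * ((((2*(n+1)) : ℕ) : ℝ) * (π / ((n:ℝ)+1)))) = 1 := by
    intro k _
    have hne : ((n:ℝ)+1) ≠ 0 := by positivity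
    have : (k : ℝ) * ((((2*(n+1)) : ℕ) : ℝ) * (π / ((n:ℝ)+1))) = (k:ℝ) * (2*π) := by
      push_cast; field_simp
    rw [this, Real.cos_nat_mul_two_pi]
  rw [Finset.sum_congr rfl this]
  simp [Nat.card_Icc]

lemma sinSum_ortho (n s t : ℕ) (hn : 1 ≤ n) (ht : 1 ≤ t) (hts : t < s) (hs : s ≤ n) :
    ∑ k ∈ Finset.Icc 1 n,
      Real.sin ((k:ℝ)*(s:ℝ)*π/((n:ℝ)+1)) * Real.sin ((k:ℝ)*(t:ℝ)*π/((n:ℝ)+1)) = 0 := by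
  set N : ℝ := (n:ℝ)+1 with hN
  have hNne : N ≠ 0 := by positivity
  have key : ∀ k ∈ Finset.Icc 1 n,
      Real.sin ((k:ℝ)*(s:ℝ)*π/N) * Real.sin ((k:ℝ)*(t:ℝ)*π/N)
        = (Real.cos ((k:ℝ) * (((s-t : ℕ):ℝ) * (π/N)))
           - Real.cos ((k:ℝ) * (((s+t : ℕ):ℝ) * (π/N)))) / 2 := by
    intro k _
    have h1 : (k:ℝ) * (((s-t : ℕ):ℝ) * (π/N))
        = (k:ℝ)*(s:ℝ)*π/N - (k:ℝ)*(t:ℝ)*π/N := by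
      push_cast [Nat.cast_sub hts.le]; field_simp
    have h2 : (k:ℝ) * (((s+t : ℕ):ℝ) * (π/N))
        = (k:ℝ)*(s:ℝ)*π/N + (k:ℝ)*(t:ℝ)*π/N := by
      push_cast; field_simp
    rw [h1, h2, Real.cos_sub, Real.cos_add]
    ring
  rw [Finset.sum_congr rfl key, ← Finset.sum_div, Finset.sum_sub_distrib]
  rw [cosSum n (s-t) (by omega) (by omega) (by omega),
      cosSum n (s+t) (by omega) (by omega) (by omega)]
  by_cases h : Even (s+t)
  · rw [if_pos h, if_pos ((Nat.even_sub hts.le).mpr (Nat.even_add.mp h))]; ring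
  · rw [if_neg h, if_neg (fun hc => h ((Nat.even_add).mpr ((Nat.even_sub hts.le).mp hc)))]
    ring

lemma sinSq_sum (n s t : ℕ) (hn : 1 ≤ n) (ht : 1 ≤ t) (hts : t < s) (hs : s ≤ n) :
    ∑ k ∈ Finset.Icc 1 n,
      Real.sin ((k:ℝ)*(s:ℝ)*π/((n:ℝ)+1))^2 * Real.sin ((k:ℝ)*(t:ℝ)*π/((n:ℝ)+1))^2
      ≤ 3*((n:ℝ)+1)/8 := by
  set N : ℝ := (n:ℝ)+1 with hN
  have hNne : N ≠ 0 := by positivity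
  have key : ∀ k ∈ Finset.Icc 1 n,
      Real.sin ((k:ℝ)*(s:ℝ)*π/N)^2 * Real.sin ((k:ℝ)*(t:ℝ)*π/N)^2
        = (1 - Real.cos ((k:ℝ) * (((2*s : ℕ):ℝ) * (π/N)))
             - Real.cos ((k:ℝ) * (((2*t : ℕ):ℝ) * (π/N)))
             + (Real.cos ((k:ℝ) * (((2*(s+t) : ℕ):ℝ) * (π/N)))
                + Real.cos ((k:ℝ) * (((2*(s-t) : ℕ):ℝ) * (π/N)))) / 2) / 4 := by
    intro k _
    set A : ℝ := (k:ℝ)*(s:ℝ)*π/N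
    set B : ℝ := (k:ℝ)*(t:ℝ)*π/N
    have e1 : (k:ℝ) * (((2*s : ℕ):ℝ) * (π/N)) = 2*A := by push_cast; ring
    have e2 : (k:ℝ) * (((2*t : ℕ):ℝ) * (π/N)) = 2*B := by push_cast; ring
    have e3 : (k:ℝ) * (((2*(s+t) : ℕ):ℝ) * (π/N)) = 2*A + 2*B := by
      push_cast; ring
    have e4 : (k:ℝ) * (((2*(s-t) : ℕ):ℝ) * (π/N)) = 2*A - 2*B := by
      push_cast [Nat.cast_sub hts.le]; ring
    rw [e1, e2, e3, e4]
    have h1 : Real.cos (2*A) = 1 - 2 * Real.sin A ^ 2 := by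
      rw [Real.cos_two_mul, Real.cos_sq']; ring
    have h2 : Real.cos (2*B) = 1 - 2 * Real.sin B ^ 2 := by
      rw [Real.cos_two_mul, Real.cos_sq']; ring
    have h3 : Real.cos (2*A + 2*B) + Real.cos (2*A - 2*B)
        = 2 * Real.cos (2*A) * Real.cos (2*B) := by
      rw [Real.cos_add, Real.cos_sub]; ring
    rw [h3, h1, h2]; ring
  rw [Finset.sum_congr rfl key]
  simp only [← Finset.sum_div, Finset.sum_add_distrib, Finset.sum_sub_distrib,
    Finset.sum_const, Nat.card_Icc, nsmul_eq_mul, mul_one]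
  rw [cosSum n (2*s) (by omega) (by omega) (by omega),
      cosSum n (2*t) (by omega) (by omega) (by omega),
      cosSum n (2*(s-t)) (by omega) (by omega) (by omega)]
  rw [if_pos (by exact even_two_mul s), if_pos (by exact even_two_mul t),
      if_pos (by exact even_two_mul (s-t))]
  have hbound : ∑ k ∈ Finset.Icc 1 n, Real.cos ((k:ℝ) * (((2*(s+t) : ℕ):ℝ) * (π/N)))
      ≤ (n:ℝ) := by
    by_cases h : 2*(s+t) = 2*(n+1)
    · rw [h]; rw [hN]; exact le_of_eq (cosSum_top n)
    · rw [hN, cosSum n (2*(s+t)) (by omega) (by omega) h]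
      split_ifs
      · push_cast; linarith [Nat.cast_nonneg (α := ℝ) n]
      · push_cast; linarith [Nat.cast_nonneg (α := ℝ) n]
  push_cast at hbound ⊢
  linarith

/-! ### Auxiliary finite-sum rearrangement lemmas -/

lemma sum_ite_ne_diag (S : Finset ℕ) (h : ℕ → ℕ → ℝ) :
    ∑ i ∈ S, ∑ k ∈ S, (if i ≠ k then h i k else 0)
      = (∑ i ∈ S, ∑ k ∈ S, h i k) - ∑ i ∈ S, h i i := by
  rw [← Finset.sum_sub_distrib]
  refine Finset.sum_congr rfl fun i hi => ?_
  have hc : ∀ k ∈ S, (if i ≠ k then h i k else 0)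
      = h i k - (if k = i then h i k else 0) := by
    intro k _
    by_cases hk : i = k
    · simp [hk]
    · rw [if_pos hk, if_neg (fun h => hk h.symm), sub_zero]
  rw [Finset.sum_congr rfl hc, Finset.sum_sub_distrib,
    Finset.sum_ite_eq' S i (h i), if_pos hi]

lemma sum_ite_ne_two (S : Finset ℕ) (i k : ℕ) (hi : i ∈ S) (hk : k ∈ S)
    (hik : i ≠ k) (g : ℕ → ℝ) :
    ∑ u ∈ S, (if i ≠ u ∧ k ≠ u then g u else 0)
      = (∑ u ∈ S, g u) - g i - g k := by
  have hc : ∀ u ∈ S, (if i ≠ u ∧ k ≠ u then g u else 0)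
      = g u - (if u = i then g u else 0) - (if u = k then g u else 0) := by
    intro u _
    by_cases h1 : u = i
    · subst h1
      rw [if_neg (by simp), if_pos rfl, if_neg hik]
      ring
    · by_cases h2 : u = k
      · subst h2
        rw [if_neg (by simp), if_neg h1, if_pos rfl]
        ring
      · rw [if_pos ⟨fun h => h1 h.symm, fun h => h2 h.symm⟩, if_neg h1, if_neg h2]
        ring
  rw [Finset.sum_congr rfl hc, Finset.sum_sub_distrib, Finset.sum_sub_distrib,
    Finset.sum_ite_eq' S i g, Finset.sum_ite_eq' S k g, if_pos hi, if_pos hk]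

lemma triple_expand (S : Finset ℕ) (a b c : ℕ → ℝ) :
    ∑ i ∈ S, ∑ k ∈ S, ∑ u ∈ S, (if i ≠ k ∧ i ≠ u ∧ k ≠ u then a i * b k * c u else 0)
      = (∑ i ∈ S, a i) * (∑ i ∈ S, b i) * (∑ i ∈ S, c i)
        - (∑ i ∈ S, a i * c i) * (∑ i ∈ S, b i)
        - (∑ i ∈ S, a i) * (∑ i ∈ S, b i * c i)
        - (∑ i ∈ S, a i * b i) * (∑ i ∈ S, c i)
        + 2 * ∑ i ∈ S, a i * b i * c i := by
  have step1 : ∀ i ∈ S, ∀ k ∈ S,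
      ∑ u ∈ S, (if i ≠ k ∧ i ≠ u ∧ k ≠ u then a i * b k * c u else 0)
        = if i ≠ k then a i * b k * (∑ u ∈ S, c u) - a i * b k * c i - a i * b k * c k
          else 0 := by
    intro i hi k hk
    by_cases hik : i = k
    · simp [hik]
    · rw [if_pos hik]
      have : ∀ u ∈ S, (if i ≠ k ∧ i ≠ u ∧ k ≠ u then a i * b k * c u else 0)
          = (if i ≠ u ∧ k ≠ u then a i * b k * c u else 0) := by
        intro u _; simp [hik]
      rw [Finset.sum_congr rfl this, sum_ite_ne_two S i k hi hk hik]
      rw [← Finset.mul_sum]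
  have step2 : ∀ i ∈ S,
      ∑ k ∈ S, ∑ u ∈ S, (if i ≠ k ∧ i ≠ u ∧ k ≠ u then a i * b k * c u else 0)
        = ∑ k ∈ S, (if i ≠ k then
            a i * b k * (∑ u ∈ S, c u) - a i * b k * c i - a i * b k * c k else 0) := by
    intro i hi
    exact Finset.sum_congr rfl (fun k hk => step1 i hi k hk)
  rw [Finset.sum_congr rfl step2, sum_ite_ne_diag S]
  have e1 : ∑ i ∈ S, ∑ k ∈ S,
      (a i * b k * (∑ u ∈ S, c u) - a i * b k * c i - a i * b k * c k)
      = (∑ i ∈ S, a i) * (∑ i ∈ S, b i) * (∑ i ∈ S, c i)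
        - (∑ i ∈ S, a i * c i) * (∑ i ∈ S, b i)
        - (∑ i ∈ S, a i) * (∑ i ∈ S, b i * c i) := by
    have inner : ∀ i ∈ S,
        ∑ k ∈ S, (a i * b k * (∑ u ∈ S, c u) - a i * b k * c i - a i * b k * c k)
          = (∑ k ∈ S, b k) * (a i * (∑ u ∈ S, c u) - a i * c i)
            - a i * ∑ k ∈ S, (b k * c k) := by
      intro i _
      calc ∑ k ∈ S, (a i * b k * (∑ u ∈ S, c u) - a i * b k * c i - a i * b k * c k)
          = ∑ k ∈ S, (b k * (a i * (∑ u ∈ S, c u) - a i * c i) - a i * (b k * c k)) :=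
            Finset.sum_congr rfl fun k _ => by ring
        _ = _ := by rw [Finset.sum_sub_distrib, ← Finset.sum_mul, ← Finset.mul_sum]
    rw [Finset.sum_congr rfl inner, Finset.sum_sub_distrib]
    have h1 : ∑ i ∈ S, ((∑ k ∈ S, b k) * (a i * (∑ u ∈ S, c u) - a i * c i))
        = (∑ k ∈ S, b k) * ((∑ i ∈ S, a i) * (∑ u ∈ S, c u) - ∑ i ∈ S, (a i * c i)) := by
      rw [← Finset.mul_sum]
      congr 1
      rw [Finset.sum_sub_distrib, ← Finset.sum_mul]
    have h2 : ∑ i ∈ S, (a i * ∑ k ∈ S, (b k * c k))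
        = (∑ i ∈ S, a i) * ∑ k ∈ S, (b k * c k) := (Finset.sum_mul S a _).symm
    rw [h1, h2]
    ring
  have e2 : ∑ i ∈ S, (a i * b i * (∑ u ∈ S, c u) - a i * b i * c i - a i * b i * c i)
      = (∑ i ∈ S, a i * b i) * (∑ i ∈ S, c i) - 2 * ∑ i ∈ S, a i * b i * c i := by
    calc ∑ i ∈ S, (a i * b i * (∑ u ∈ S, c u) - a i * b i * c i - a i * b i * c i)
        = ∑ i ∈ S, ((a i * b i) * (∑ u ∈ S, c u) - 2 * (a i * b i * c i)) :=
          Finset.sum_congr rfl fun i _ => by ring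
      _ = _ := by
          rw [Finset.sum_sub_distrib, ← Finset.sum_mul, ← Finset.mul_sum]
  rw [e1, e2]
  ring

lemma pair_expand (S : Finset ℕ) (a : ℕ → ℝ) :
    ∑ i ∈ S, ∑ k ∈ S, (if i ≠ k then a i * a k else 0)
      = (∑ i ∈ S, a i) ^ 2 - ∑ i ∈ S, a i * a i := by
  rw [sum_ite_ne_diag S]
  congr 1
  rw [sq, Finset.sum_mul_sum]

/-! ### Properties of `pMat` -/

lemma pMat_ortho (n s t : ℕ) (hn : 1 ≤ n) (hs : s ∈ Finset.Icc 1 n)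
    (ht : t ∈ Finset.Icc 1 n) (hst : s ≠ t) :
    ∑ k ∈ Finset.Icc 1 n, pMat n k s * pMat n k t = 0 := by
  simp only [Finset.mem_Icc] at hs ht
  have key : ∀ s t : ℕ, 1 ≤ t → t < s → s ≤ n →
      ∑ k ∈ Finset.Icc 1 n, pMat n k s * pMat n k t = 0 := by
    intro s t h1 h2 h3
    have hc : ∀ k ∈ Finset.Icc 1 n, pMat n k s * pMat n k t
        = Real.sqrt (2 / ((n : ℝ) + 1))^2
          * (Real.sin ((k:ℝ)*(s:ℝ)*π/((n:ℝ)+1)) * Real.sin ((k:ℝ)*(t:ℝ)*π/((n:ℝ)+1))) := by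
      intro k _; unfold pMat; ring
    rw [Finset.sum_congr rfl hc, ← Finset.mul_sum, sinSum_ortho n s t hn h1 h2 h3, mul_zero]
  rcases lt_or_gt_of_ne hst with h | h
  · have h0 := key t s hs.1 h ht.2
    have hcomm : ∀ k ∈ Finset.Icc 1 n, pMat n k s * pMat n k t = pMat n k t * pMat n k s :=
      fun k _ => mul_comm _ _
    rw [Finset.sum_congr rfl hcomm, h0]
  · exact key s t ht.1 h hs.2

lemma pMat_fourth (n s t : ℕ) (hn : 1 ≤ n) (hs : s ∈ Finset.Icc 1 n)
    (ht : t ∈ Finset.Icc 1 n) (hst : s ≠ t) :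
    ∑ k ∈ Finset.Icc 1 n, pMat n k s ^ 2 * pMat n k t ^ 2 ≤ 3 / (2 * ((n:ℝ)+1)) := by
  simp only [Finset.mem_Icc] at hs ht
  have hNpos : (0:ℝ) < (n:ℝ)+1 := by positivity
  have hsq : Real.sqrt (2 / ((n : ℝ) + 1))^2 = 2 / ((n:ℝ)+1) :=
    Real.sq_sqrt (by positivity)
  have key : ∀ s t : ℕ, 1 ≤ t → t < s → s ≤ n →
      ∑ k ∈ Finset.Icc 1 n, pMat n k s ^ 2 * pMat n k t ^ 2 ≤ 3 / (2 * ((n:ℝ)+1)) := by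
    intro s t h1 h2 h3
    have hc : ∀ k ∈ Finset.Icc 1 n, pMat n k s ^ 2 * pMat n k t ^ 2
        = (2/((n:ℝ)+1))^2
          * (Real.sin ((k:ℝ)*(s:ℝ)*π/((n:ℝ)+1))^2
             * Real.sin ((k:ℝ)*(t:ℝ)*π/((n:ℝ)+1))^2) := by
      intro k _
      unfold pMat
      rw [mul_pow, mul_pow, hsq]
      ring
    rw [Finset.sum_congr rfl hc, ← Finset.mul_sum]
    have hb := sinSq_sum n s t hn h1 h2 h3
    have h4 : (0:ℝ) < (2/((n:ℝ)+1))^2 := by positivity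
    calc (2/((n:ℝ)+1))^2 * ∑ k ∈ Finset.Icc 1 n,
          Real.sin ((k:ℝ)*(s:ℝ)*π/((n:ℝ)+1))^2 * Real.sin ((k:ℝ)*(t:ℝ)*π/((n:ℝ)+1))^2
        ≤ (2/((n:ℝ)+1))^2 * (3*((n:ℝ)+1)/8) :=
          mul_le_mul_of_nonneg_left hb (le_of_lt h4)
      _ = 3 / (2 * ((n:ℝ)+1)) := by field_simp; ring
  rcases lt_or_gt_of_ne hst with h | h
  · have h0 := key t s hs.1 h ht.2
    have hcomm : ∀ k ∈ Finset.Icc 1 n, pMat n k s ^ 2 * pMat n k t ^ 2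
        = pMat n k t ^ 2 * pMat n k s ^ 2 := fun k _ => mul_comm _ _
    rw [Finset.sum_congr rfl hcomm]
    exact h0
  · exact key s t ht.1 h hs.2

lemma pMat_abs_le (n i j : ℕ) : |pMat n i j| ≤ Real.sqrt (2 / ((n : ℝ) + 1)) := by
  unfold pMat
  rw [abs_mul, abs_of_nonneg (Real.sqrt_nonneg _)]
  calc Real.sqrt (2 / ((n : ℝ) + 1)) * |Real.sin ((i : ℝ) * (j : ℝ) * π / ((n : ℝ) + 1))|
      ≤ Real.sqrt (2 / ((n : ℝ) + 1)) * 1 :=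
        mul_le_mul_of_nonneg_left (Real.abs_sin_le_one _) (Real.sqrt_nonneg _)
    _ = _ := mul_one _

/-- **Bounds on quadruple products of discrete sine-transform entries
(Appendix D).** -/
theorem sine_matrix_quadruple_products :
    -- (a)
    (∀ n : ℕ, 2 ≤ n → ∀ s ∈ Finset.Icc 1 n, ∀ t ∈ Finset.Icc 1 n, s ≠ t →
      (∑ i ∈ Finset.Icc 1 n, ∑ k ∈ Finset.Icc 1 n,
          if i ≠ k then pMat n i s * pMat n i t * pMat n k s * pMat n k t else 0) =
        -(∑ k ∈ Finset.Icc 1 n, pMat n k s ^ 2 * pMat n k t ^ 2) ∧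
      |∑ i ∈ Finset.Icc 1 n, ∑ k ∈ Finset.Icc 1 n,
          if i ≠ k then pMat n i s * pMat n i t * pMat n k s * pMat n k t else 0| ≤
        3 / (2 * ((n : ℝ) + 1))) ∧
    -- (b)
    ∃ C : ℝ, ∀ n : ℕ, 2 ≤ n → ∀ s ∈ Finset.Icc 1 n, ∀ t ∈ Finset.Icc 1 n, s ≠ t →
      |∑ i ∈ Finset.Icc 1 n, ∑ k ∈ Finset.Icc 1 n, ∑ u ∈ Finset.Icc 1 n,
          if i ≠ k ∧ i ≠ u ∧ k ≠ u then
            pMat n i s * pMat n i t * pMat n k s * pMat n u t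
          else 0| ≤ C := by
  constructor
  · -- part (a)
    intro n hn s hs t ht hst
    have hn1 : 1 ≤ n := by omega
    have heq : (∑ i ∈ Finset.Icc 1 n, ∑ k ∈ Finset.Icc 1 n,
        if i ≠ k then pMat n i s * pMat n i t * pMat n k s * pMat n k t else 0) =
        -(∑ k ∈ Finset.Icc 1 n, pMat n k s ^ 2 * pMat n k t ^ 2) := by
      have hre : (∑ i ∈ Finset.Icc 1 n, ∑ k ∈ Finset.Icc 1 n,
          if i ≠ k then pMat n i s * pMat n i t * pMat n k s * pMat n k t else 0)
          = ∑ i ∈ Finset.Icc 1 n, ∑ k ∈ Finset.Icc 1 n,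
            (if i ≠ k then (pMat n i s * pMat n i t) * (pMat n k s * pMat n k t)
             else 0) := by
        refine Finset.sum_congr rfl fun i _ => Finset.sum_congr rfl fun k _ => ?_
        split_ifs
        · ring
        · rfl
      rw [hre, pair_expand (Finset.Icc 1 n) (fun j => pMat n j s * pMat n j t)]
      have hA : ∑ i ∈ Finset.Icc 1 n, pMat n i s * pMat n i t = 0 :=
        pMat_ortho n s t hn1 hs ht hst
      rw [hA]
      have hdiag : ∑ i ∈ Finset.Icc 1 n,
          pMat n i s * pMat n i t * (pMat n i s * pMat n i t)
          = ∑ k ∈ Finset.Icc 1 n, pMat n k s ^ 2 * pMat n k t ^ 2 :=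
        Finset.sum_congr rfl fun i _ => by ring
      rw [hdiag]
      ring
    refine ⟨heq, ?_⟩
    rw [heq, abs_neg, abs_of_nonneg]
    · exact pMat_fourth n s t hn1 hs ht hst
    · exact Finset.sum_nonneg fun k _ => mul_nonneg (sq_nonneg _) (sq_nonneg _)
  · -- part (b)
    refine ⟨10, ?_⟩
    intro n hn s hs t ht hst
    have hn1 : 1 ≤ n := by omega
    have hNpos : (0:ℝ) < (n:ℝ)+1 := by positivity
    have hnR : (1:ℝ) ≤ (n:ℝ) := by exact_mod_cast hn1
    set cn : ℝ := Real.sqrt (2 / ((n : ℝ) + 1)) with hcn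
    have hcn0 : 0 ≤ cn := Real.sqrt_nonneg _
    have hcsq : cn^2 = 2 / ((n:ℝ)+1) := Real.sq_sqrt (by positivity)
    have hc4 : cn^4 = 4 / ((n:ℝ)+1)^2 := by
      have h44 : cn^4 = (cn^2)^2 := by ring
      rw [h44, hcsq]
      rw [div_pow]
      norm_num
    rw [triple_expand (Finset.Icc 1 n) (fun i => pMat n i s * pMat n i t)
      (fun k => pMat n k s) (fun u => pMat n u t)]
    have hA : ∑ i ∈ Finset.Icc 1 n, pMat n i s * pMat n i t = 0 :=
      pMat_ortho n s t hn1 hs ht hst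
    rw [hA]
    -- elementary bounds
    have hcard : (Finset.Icc 1 n).card = n := by rw [Nat.card_Icc]; omega
    have sum_bound : ∀ (f : ℕ → ℝ) (M : ℝ), (∀ i ∈ Finset.Icc 1 n, |f i| ≤ M) →
        |∑ i ∈ Finset.Icc 1 n, f i| ≤ (n:ℝ) * M := by
      intro f M hf
      calc |∑ i ∈ Finset.Icc 1 n, f i| ≤ ∑ i ∈ Finset.Icc 1 n, |f i| :=
            Finset.abs_sum_le_sum_abs _ _
        _ ≤ (Finset.Icc 1 n).card • M := Finset.sum_le_card_nsmul _ _ M hf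
        _ = (n:ℝ) * M := by rw [hcard, nsmul_eq_mul]
    have habs3 : ∀ x y z : ℝ, |x| ≤ cn → |y| ≤ cn → |z| ≤ cn → |x * y * z| ≤ cn^3 := by
      intro x y z hx hy hz
      have h1 : |x| * |y| ≤ cn * cn := mul_le_mul hx hy (abs_nonneg _) hcn0
      calc |x * y * z| = |x| * |y| * |z| := by rw [abs_mul, abs_mul]
        _ ≤ (cn * cn) * cn :=
            mul_le_mul h1 hz (abs_nonneg _) (mul_nonneg hcn0 hcn0)
        _ = cn^3 := by ring
    have habs4 : ∀ w x y z : ℝ, |w| ≤ cn → |x| ≤ cn → |y| ≤ cn → |z| ≤ cn →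
        |w * x * y * z| ≤ cn^4 := by
      intro w x y z hw hx hy hz
      have h1 : |w * x * y| ≤ cn^3 := habs3 w x y hw hx hy
      calc |w * x * y * z| = |w * x * y| * |z| := by rw [abs_mul]
        _ ≤ cn^3 * cn := mul_le_mul h1 hz (abs_nonneg _) (by positivity)
        _ = cn^4 := by ring
    have hb1 : |∑ i ∈ Finset.Icc 1 n, pMat n i s * pMat n i t * pMat n i t|
        ≤ (n:ℝ) * cn^3 :=
      sum_bound _ _ (fun i _ => habs3 _ _ _ (pMat_abs_le n i s) (pMat_abs_le n i t)
        (pMat_abs_le n i t))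
    have hb2 : |∑ i ∈ Finset.Icc 1 n, pMat n i s * pMat n i t * pMat n i s|
        ≤ (n:ℝ) * cn^3 :=
      sum_bound _ _ (fun i _ => habs3 _ _ _ (pMat_abs_le n i s) (pMat_abs_le n i t)
        (pMat_abs_le n i s))
    have hb3 : |∑ i ∈ Finset.Icc 1 n, pMat n i s| ≤ (n:ℝ) * cn :=
      sum_bound _ _ (fun i _ => pMat_abs_le n i s)
    have hb4 : |∑ i ∈ Finset.Icc 1 n, pMat n i t| ≤ (n:ℝ) * cn :=
      sum_bound _ _ (fun i _ => pMat_abs_le n i t)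
    have hb5 : |∑ i ∈ Finset.Icc 1 n, pMat n i s * pMat n i t * pMat n i s * pMat n i t|
        ≤ (n:ℝ) * cn^4 :=
      sum_bound _ _ (fun i _ => habs4 _ _ _ _ (pMat_abs_le n i s) (pMat_abs_le n i t)
        (pMat_abs_le n i s) (pMat_abs_le n i t))
    -- numeric closing
    have hnum : ((n:ℝ) * cn^3) * ((n:ℝ) * cn) + ((n:ℝ) * cn^3) * ((n:ℝ) * cn)
        + 2 * ((n:ℝ) * cn^4) ≤ 10 := by
      have hre : ((n:ℝ) * cn^3) * ((n:ℝ) * cn) + ((n:ℝ) * cn^3) * ((n:ℝ) * cn)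
          + 2 * ((n:ℝ) * cn^4) = (2*(n:ℝ)^2 + 2*(n:ℝ)) * cn^4 := by ring
      rw [hre, hc4]
      rw [mul_div_assoc', div_le_iff₀ (by positivity)]
      nlinarith [sq_nonneg ((n:ℝ) - 1), sq_nonneg (n:ℝ)]
    -- put everything together
    set P1 : ℝ := ∑ i ∈ Finset.Icc 1 n, pMat n i s * pMat n i t * pMat n i t
    set P2 : ℝ := ∑ i ∈ Finset.Icc 1 n, pMat n i s * pMat n i t * pMat n i s
    set B : ℝ := ∑ i ∈ Finset.Icc 1 n, pMat n i s
    set D : ℝ := ∑ i ∈ Finset.Icc 1 n, pMat n i t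
    set G : ℝ := ∑ i ∈ Finset.Icc 1 n, pMat n i s * pMat n i t * pMat n i s * pMat n i t
    have he : 0 * B * D - P1 * B - 0 * 0 - P2 * D + 2 * G
        = (-(P1 * B)) + (-(P2 * D)) + 2 * G := by ring
    rw [he]
    calc |(-(P1 * B)) + (-(P2 * D)) + 2 * G|
        ≤ |(-(P1 * B))| + |(-(P2 * D))| + |2 * G| := abs_add_three _ _ _
      _ = |P1| * |B| + |P2| * |D| + 2 * |G| := by
          rw [abs_neg, abs_neg, abs_mul, abs_mul, abs_mul, abs_two]
      _ ≤ ((n:ℝ) * cn^3) * ((n:ℝ) * cn) + ((n:ℝ) * cn^3) * ((n:ℝ) * cn)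
          + 2 * ((n:ℝ) * cn^4) := by
          refine add_le_add (add_le_add ?_ ?_) ?_
          · exact mul_le_mul hb1 hb3 (abs_nonneg _) (by positivity)
          · exact mul_le_mul hb2 hb4 (abs_nonneg _) (by positivity)
          · linarith
      _ ≤ 10 := hnum

end PaperBvM
end
end

section
/- Column sums of the discrete sine-transform matrix (Appendix D, equation (D.4)). Let n ≥ 1 and p_{ij} := sqrt(2/(n+1))·sin(ijπ/(n+1)) for 1 ≤ i, j ≤ n. Then for every 1 ≤ j ≤ n: ∑_{i=1}^n p_{ij} = 0 if j is even, and ∑_{i=1}^n p_{ij} = sqrt(2/(n+1)) · cot( jπ/(2(n+1)) ) if j is odd. Consequently, there exists an absolute constant C such that ( ∑_{i=1}^n p_{ij} )² ≤ C·n/j² for all n ≥ 1 and all 1 ≤ j ≤ n. -/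
open Real

noncomputable section

namespace PaperBvM

/-- Telescoping identity for sums of sines. -/
lemma sum_sin_mul (x : ℝ) (n : ℕ) :
    (∑ i ∈ Finset.Icc 1 n, Real.sin (2 * (i : ℝ) * x)) * (2 * Real.sin x)
      = Real.cos x - Real.cos ((2 * (n : ℝ) + 1) * x) := by
  induction n with
  | zero => simp
  | succ m ih =>
    rw [Finset.sum_Icc_succ_top (by omega), add_mul, ih]
    have h : Real.cos ((2 * (m : ℝ) + 1) * x) - Real.cos ((2 * ((m : ℝ) + 1) + 1) * x)
        = Real.sin (2 * ((m : ℝ) + 1) * x) * (2 * Real.sin x) := by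
      rw [Real.cos_sub_cos]
      have : ((2 * (m : ℝ) + 1) * x + (2 * ((m : ℝ) + 1) + 1) * x) / 2
          = 2 * ((m : ℝ) + 1) * x := by ring
      rw [this]
      have : ((2 * (m : ℝ) + 1) * x - (2 * ((m : ℝ) + 1) + 1) * x) / 2 = -x := by ring
      rw [this, Real.sin_neg]
      ring
    push_cast
    push_cast at h
    linarith [h]

/-- **Column sums of the discrete sine-transform matrix (Appendix D, (D.4)).** -/
theorem sine_matrix_column_sums :
    (∀ n : ℕ, 1 ≤ n → ∀ j : ℕ, 1 ≤ j → j ≤ n →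
      (Even j → (∑ i ∈ Finset.Icc 1 n, pMat n i j) = 0) ∧
      (Odd j → (∑ i ∈ Finset.Icc 1 n, pMat n i j) =
        Real.sqrt (2 / ((n : ℝ) + 1)) * Real.cot ((j : ℝ) * π / (2 * ((n : ℝ) + 1))))) ∧
    ∃ C : ℝ, ∀ n : ℕ, 1 ≤ n → ∀ j : ℕ, 1 ≤ j → j ≤ n →
      (∑ i ∈ Finset.Icc 1 n, pMat n i j) ^ 2 ≤ C * (n : ℝ) / (j : ℝ) ^ 2 := by
  have key : ∀ n : ℕ, 1 ≤ n → ∀ j : ℕ, 1 ≤ j → j ≤ n →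
      (Even j → (∑ i ∈ Finset.Icc 1 n, pMat n i j) = 0) ∧
      (Odd j → (∑ i ∈ Finset.Icc 1 n, pMat n i j) =
        Real.sqrt (2 / ((n : ℝ) + 1)) * Real.cot ((j : ℝ) * π / (2 * ((n : ℝ) + 1)))) := by
    intro n hn j hj hjn
    set x : ℝ := (j : ℝ) * π / (2 * ((n : ℝ) + 1)) with hx
    have hn1 : (0 : ℝ) < (n : ℝ) + 1 := by positivity
    have hj1 : (1 : ℝ) ≤ (j : ℝ) := by exact_mod_cast hj
    have hjn' : (j : ℝ) ≤ (n : ℝ) := by exact_mod_cast hjn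
    have hxpos : 0 < x := by
      rw [hx]; positivity
    have hxlt : x < π / 2 := by
      rw [hx, div_lt_div_iff₀ (by positivity) two_pos]
      have : (j : ℝ) < (n : ℝ) + 1 := by linarith
      nlinarith [Real.pi_pos]
    have hsin : 0 < Real.sin x :=
      Real.sin_pos_of_pos_of_lt_pi hxpos (by linarith [Real.pi_pos])
    have hsum : (∑ i ∈ Finset.Icc 1 n, pMat n i j)
        = Real.sqrt (2 / ((n : ℝ) + 1)) *
          ((Real.cos x - Real.cos ((2 * (n : ℝ) + 1) * x)) / (2 * Real.sin x)) := by
      have heq : ∀ i ∈ Finset.Icc 1 n, pMat n i j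
          = Real.sqrt (2 / ((n : ℝ) + 1)) * Real.sin (2 * (i : ℝ) * x) := by
        intro i _
        unfold pMat
        congr 2
        rw [hx]
        field_simp
      rw [Finset.sum_congr rfl heq, ← Finset.mul_sum]
      congr 1
      rw [eq_div_iff (by positivity)]
      exact sum_sin_mul x n
    have hcos : Real.cos ((2 * (n : ℝ) + 1) * x) = (-1 : ℝ) ^ j * Real.cos x := by
      have harg : (2 * (n : ℝ) + 1) * x = (j : ℝ) * π - x := by
        rw [hx]; field_simp; ring
      rw [harg, Real.cos_nat_mul_pi_sub]
    constructor
    · intro hev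
      rw [hsum, hcos, Even.neg_one_pow hev]
      simp
    · intro hodd
      rw [hsum, hcos, Odd.neg_one_pow hodd]
      rw [Real.cot_eq_cos_div_sin]
      congr 1
      field_simp
      ring
  refine ⟨key, ⟨2, ?_⟩⟩
  intro n hn j hj hjn
  have hn1 : (0 : ℝ) < (n : ℝ) + 1 := by positivity
  have hj1 : (1 : ℝ) ≤ (j : ℝ) := by exact_mod_cast hj
  have hjn' : (j : ℝ) ≤ (n : ℝ) := by exact_mod_cast hjn
  obtain ⟨h1, h2⟩ := key n hn j hj hjn
  rcases Nat.even_or_odd j with hev | hodd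
  · rw [h1 hev]
    norm_num
    positivity
  · rw [h2 hodd]
    set x : ℝ := (j : ℝ) * π / (2 * ((n : ℝ) + 1)) with hx
    have hxpos : 0 < x := by rw [hx]; positivity
    have hxlt : x < π / 2 := by
      rw [hx, div_lt_div_iff₀ (by positivity) two_pos]
      have : (j : ℝ) < (n : ℝ) + 1 := by linarith
      nlinarith [Real.pi_pos]
    have hsin : 0 < Real.sin x :=
      Real.sin_pos_of_pos_of_lt_pi hxpos (by linarith [Real.pi_pos])
    have hcospos : 0 < Real.cos x := Real.cos_pos_of_mem_Ioo ⟨by linarith [Real.pi_pos], hxlt⟩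
    have htan : x < Real.tan x := Real.lt_tan hxpos hxlt
    have htanpos : 0 < Real.tan x := lt_trans hxpos htan
    have hcot : Real.cot x < 1 / x := by
      rw [Real.cot_eq_cos_div_sin, div_lt_div_iff₀ hsin hxpos]
      have := htan
      rw [Real.tan_eq_sin_div_cos, lt_div_iff₀ hcospos] at this
      linarith
    have hcotpos : 0 < Real.cot x := by
      rw [Real.cot_eq_cos_div_sin]; positivity
    have hsq : Real.sqrt (2 / ((n : ℝ) + 1)) ^ 2 = 2 / ((n : ℝ) + 1) :=
      Real.sq_sqrt (by positivity)
    rw [mul_pow, hsq]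
    have hcot2 : Real.cot x ^ 2 ≤ (1 / x) ^ 2 := by
      apply pow_le_pow_left₀ (le_of_lt hcotpos) (le_of_lt hcot)
    have hxval : (1 / x) ^ 2 = (2 * ((n : ℝ) + 1)) ^ 2 / ((j : ℝ) * π) ^ 2 := by
      have hjpi : (0:ℝ) < (j : ℝ) * π := by positivity
      rw [hx]
      field_simp
    have hpi : (3 : ℝ) < π := Real.pi_gt_three
    have hjpos : (0 : ℝ) < (j : ℝ) := by linarith
    have hbound : 2 / ((n : ℝ) + 1) * ((2 * ((n : ℝ) + 1)) ^ 2 / ((j : ℝ) * π) ^ 2)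
        ≤ 2 * (n : ℝ) / (j : ℝ) ^ 2 := by
      rw [div_mul_div_comm, div_le_div_iff₀ (by positivity) (by positivity)]
      have hn1' : (n : ℝ) + 1 ≤ 2 * (n : ℝ) := by
        have : (1 : ℝ) ≤ (n : ℝ) := by exact_mod_cast hn
        linarith
      have hpi2 : (9 : ℝ) ≤ π ^ 2 := by nlinarith
      have h9 : 4 * ((n : ℝ) + 1) ≤ (n : ℝ) * π ^ 2 := by
        nlinarith [mul_le_mul_of_nonneg_left hpi2 (show (0:ℝ) ≤ (n : ℝ) by positivity)]
      nlinarith [mul_le_mul_of_nonneg_left h9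
        (show (0:ℝ) ≤ 2 * ((n : ℝ) + 1) * (j : ℝ) ^ 2 by positivity)]
    calc 2 / ((n : ℝ) + 1) * Real.cot x ^ 2
        ≤ 2 / ((n : ℝ) + 1) * ((1 / x) ^ 2) := by
          apply mul_le_mul_of_nonneg_left hcot2 (by positivity)
      _ = 2 / ((n : ℝ) + 1) * ((2 * ((n : ℝ) + 1)) ^ 2 / ((j : ℝ) * π) ^ 2) := by rw [hxval]
      _ ≤ 2 * (n : ℝ) / (j : ℝ) ^ 2 := hbound

end PaperBvM
end
end

section
/- Deterministic bound on squared deviations of weighted diagonal sums (Appendix C, equation (C.26)). Fix θ > 0 and σ > 0, and for n ≥ 1 set Λ_j := θ + 2nσ²(1 − cos(jπ/(n+1))) for 1 ≤ j ≤ n, and p_{ij} := sqrt(2/(n+1))·sin(ijπ/(n+1)). Then for p = 2 and p = 3 there exists a constant C = C(θ, σ, p), independent of n, such that for all n ≥ 1: ∑_{i=1}^n ( ∑_{j=1}^n (1 − n·p_{ij}²)/Λ_j^p )² ≤ C·n^{3/2}. -/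
open Real

noncomputable section

namespace PaperBvM

lemma tele (m : ℕ) (hm : 1 ≤ m) : ∀ n : ℕ, m ≤ n →
    ∑ j ∈ Finset.Icc (m+1) n, (1:ℝ)/(j:ℝ)^2 ≤ 1/m - 1/n := by
  intro n
  induction n with
  | zero => intro h; omega
  | succ n ih =>
    intro h
    rcases Nat.lt_or_ge m (n+1) with h1 | h1
    · have hmn : m ≤ n := by omega
      rw [Finset.sum_Icc_succ_top (by omega : m + 1 ≤ n + 1)]
      have h2 := ih hmn
      have hn : (1:ℝ) ≤ n := by exact_mod_cast hm.trans hmn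
      have h3 : (1:ℝ)/((n:ℝ)+1)^2 ≤ 1/n - 1/((n:ℝ)+1) := by
        rw [div_sub_div _ _ (by positivity) (by positivity),
          div_le_div_iff₀ (by positivity) (by positivity)]
        nlinarith
      push_cast
      linarith
    · have : m = n + 1 := by omega
      subst this
      simp

lemma cosSum_s19 (N : ℕ) (hN : 0 < N) (m : ℤ) :
    ∑ i ∈ Finset.range N, Real.cos (2 * π * (m:ℝ) * (i:ℝ) / (N:ℝ)) =
      if (N:ℤ) ∣ m then (N:ℝ) else 0 := by
  by_cases h : (N:ℤ) ∣ m
  · obtain ⟨k, rfl⟩ := h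
    rw [if_pos ⟨k, rfl⟩]
    have hNe : ((N:ℝ)) ≠ 0 := by positivity
    have : ∀ i ∈ Finset.range N, Real.cos (2 * π * (((N:ℤ)*k : ℤ):ℝ) * (i:ℝ) / (N:ℝ)) = 1 := by
      intro i _
      have harg : 2 * π * (((N:ℤ)*k : ℤ):ℝ) * (i:ℝ) / (N:ℝ) = ((k * (i:ℤ) : ℤ):ℝ) * (2*π) := by
        push_cast
        field_simp
      rw [harg, Real.cos_int_mul_two_pi]
    rw [Finset.sum_congr rfl this]
    simp
  · rw [if_neg h]
    set z : ℂ := Complex.exp (2 * (π:ℂ) * Complex.I * (m:ℂ) / (N:ℂ)) with hz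
    have hNe : ((N:ℂ)) ≠ 0 := by exact_mod_cast Nat.cast_ne_zero.2 hN.ne'
    have h2πI : (2 * (π:ℂ) * Complex.I) ≠ 0 :=
      mul_ne_zero (mul_ne_zero two_ne_zero (Complex.ofReal_ne_zero.mpr Real.pi_ne_zero))
        Complex.I_ne_zero
    have hz1 : z ≠ 1 := by
      intro hone
      rw [hz, Complex.exp_eq_one_iff] at hone
      obtain ⟨k, hk⟩ := hone
      apply h
      refine ⟨k, ?_⟩
      have h3 : (2*(π:ℂ)*Complex.I) * (m:ℂ) = (2*(π:ℂ)*Complex.I) * ((N:ℂ) * k) := by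
        field_simp at hk
        linear_combination (2*(π:ℂ)*Complex.I) * hk
      have h4 := mul_left_cancel₀ h2πI h3
      exact_mod_cast h4
    have hzN : z ^ N = 1 := by
      rw [hz, ← Complex.exp_nat_mul]
      have : (N:ℂ) * (2 * (π:ℂ) * Complex.I * (m:ℂ) / (N:ℂ)) = (m:ℂ) * (2 * π * Complex.I) := by
        field_simp
      rw [this, Complex.exp_int_mul_two_pi_mul_I]
    have hsum : ∑ i ∈ Finset.range N, z ^ i = 0 := by
      rw [geom_sum_eq hz1, hzN]; simp
    have hre : ∀ i : ℕ, Real.cos (2 * π * (m:ℝ) * (i:ℝ) / (N:ℝ)) = (z ^ i).re := by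
      intro i
      have hzi : z ^ i = Complex.exp (((2 * π * (m:ℝ) * (i:ℝ) / (N:ℝ) : ℝ) : ℂ) * Complex.I) := by
        rw [hz, ← Complex.exp_nat_mul]
        congr 1
        push_cast
        field_simp
      rw [hzi, Complex.exp_ofReal_mul_I_re]
    calc ∑ i ∈ Finset.range N, Real.cos (2 * π * (m:ℝ) * (i:ℝ) / (N:ℝ))
        = ∑ i ∈ Finset.range N, (z ^ i).re := Finset.sum_congr rfl (fun i _ => hre i)
      _ = (∑ i ∈ Finset.range N, z ^ i).re := (Complex.re_sum _ _).symm
      _ = 0 := by rw [hsum]; simp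

lemma cosmul (x y : ℝ) : Real.cos x * Real.cos y = (Real.cos (x - y) + Real.cos (x + y)) / 2 := by
  have h1 := Real.cos_add x y
  have h2 := Real.cos_sub x y
  linarith

set_option maxHeartbeats 1000000 in
/-- **Deterministic bound on squared deviations of weighted diagonal sums
(Appendix C, equation (C.26)).** With `Λ_j = θ + 2nσ²(1 − cos(jπ/(n+1)))`, for
`p = 2, 3` there is `C = C(θ,σ,p)` with
`∑_{i=1}^n (∑_{j=1}^n (1 − n p_{ij}²)/Λ_j^p)² ≤ C n^{3/2}` for all `n ≥ 1`. -/
theorem weighted_diagonal_sums_bound (θ σ : ℝ) (hθ : 0 < θ) (hσ : 0 < σ) :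
    ∀ p : ℕ, p = 2 ∨ p = 3 → ∃ C : ℝ, ∀ n : ℕ, 1 ≤ n →
      (∑ i ∈ Finset.Icc 1 n,
        (∑ j ∈ Finset.Icc 1 n,
          (1 - (n : ℝ) * pMat n i j ^ 2) /
            (θ + 2 * (n : ℝ) * σ ^ 2 *
              (1 - Real.cos ((j : ℝ) * π / ((n : ℝ) + 1)))) ^ p) ^ 2) ≤
      C * (n : ℝ) ^ ((3 : ℝ) / 2) := by
  intro p hp
  obtain ⟨q, rfl⟩ : ∃ q, p = q + 1 := ⟨p - 1, by omega⟩
  set K : ℝ := 1/θ^2 + 1/(2*θ*σ^2) with hKdef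
  have hKpos : 0 < K := by positivity
  refine ⟨2*((θ^(q+1))⁻¹)^2 + 4*K*(θ^(2*q))⁻¹, ?_⟩
  intro n hn
  have hnpos : (0:ℝ) < n := by exact_mod_cast hn
  have hn1 : (1:ℝ) ≤ n := by exact_mod_cast hn
  have hNpos : (0:ℝ) < (n:ℝ) + 1 := by linarith
  have hsqrt1 : (1:ℝ) ≤ Real.sqrt n := by
    rw [show (1:ℝ) = Real.sqrt 1 by simp]
    exact Real.sqrt_le_sqrt hn1
  have hsqrtpos : (0:ℝ) < Real.sqrt n := by linarith
  set Λ : ℕ → ℝ := fun j => θ + 2 * (n:ℝ) * σ^2 * (1 - Real.cos ((j:ℝ) * π / ((n:ℝ)+1)))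
    with hΛdef
  have hΛθ : ∀ j, θ ≤ Λ j := by
    intro j
    have h1 : Real.cos ((j:ℝ) * π / ((n:ℝ)+1)) ≤ 1 := Real.cos_le_one _
    have : 0 ≤ 2 * (n:ℝ) * σ^2 * (1 - Real.cos ((j:ℝ) * π / ((n:ℝ)+1))) :=
      mul_nonneg (by positivity) (by linarith)
    simp only [hΛdef]; linarith
  have hΛpos : ∀ j, 0 < Λ j := fun j => lt_of_lt_of_le hθ (hΛθ j)
  set a : ℕ → ℝ := fun j => ((Λ j)^(q+1))⁻¹ with hadef
  have hapos : ∀ j, 0 < a j := fun j => by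
    have := hΛpos j
    positivity
  have ha_le : ∀ j, a j ≤ (θ^(q+1))⁻¹ := by
    intro j
    exact inv_anti₀ (by positivity) (pow_le_pow_left₀ hθ.le (hΛθ j) _)
  -- quadratic lower bound for Λ
  have hquad : ∀ j ∈ Finset.Icc 1 n, θ + σ^2 * (j:ℝ)^2 / n ≤ Λ j := by
    intro j hj
    rw [Finset.mem_Icc] at hj
    have hj1 : (1:ℝ) ≤ j := by exact_mod_cast hj.1
    have hjn : (j:ℝ) ≤ n := by exact_mod_cast hj.2
    set x : ℝ := (j:ℝ) * π / ((n:ℝ)+1) with hxdef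
    have hx0 : 0 ≤ x := by positivity
    have hxπ : x ≤ π := by
      rw [hxdef, div_le_iff₀ hNpos]
      nlinarith [Real.pi_pos]
    have hcos : Real.cos x ≤ 1 - 2/π^2 * x^2 :=
      Real.cos_le_one_sub_mul_cos_sq (by rw [abs_of_nonneg hx0]; exact hxπ)
    have hx2 : 2/π^2 * x^2 = 2 * (j:ℝ)^2 / ((n:ℝ)+1)^2 := by
      rw [hxdef]
      field_simp
    have hkey : σ^2 * (j:ℝ)^2 / n ≤ 2 * (n:ℝ) * σ^2 * (2 * (j:ℝ)^2 / ((n:ℝ)+1)^2) := by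
      have e1 : 2 * (n:ℝ) * σ^2 * (2 * (j:ℝ)^2 / ((n:ℝ)+1)^2)
          = 4 * (n:ℝ) * σ^2 * (j:ℝ)^2 / ((n:ℝ)+1)^2 := by ring
      rw [e1, div_le_div_iff₀ hnpos (by positivity)]
      have h4 : ((n:ℝ)+1)^2 ≤ 4 * (n:ℝ)^2 := by nlinarith
      have hσ2 : (0:ℝ) ≤ σ^2 * (j:ℝ)^2 := by positivity
      nlinarith [mul_le_mul_of_nonneg_left h4 hσ2]
    simp only [hΛdef]
    have : 2 * (n:ℝ) * σ^2 * (2 * (j:ℝ)^2 / ((n:ℝ)+1)^2) ≤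
        2 * (n:ℝ) * σ^2 * (1 - Real.cos x) := by
      apply mul_le_mul_of_nonneg_left _ (by positivity)
      linarith [hx2 ▸ hcos]
    linarith [hkey.trans this]
  -- bound on sum of (θ + σ²j²/n)⁻²
  have S2 : ∑ j ∈ Finset.Icc 1 n, ((θ + σ^2 * (j:ℝ)^2 / n)^2)⁻¹ ≤ K * Real.sqrt n := by
    set m := Nat.sqrt n with hmdef
    have hm1 : 1 ≤ m := Nat.sqrt_pos.2 (by omega)
    have hmn : m ≤ n := Nat.sqrt_le_self n
    have hms : (m:ℝ) ≤ Real.sqrt n := by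
      have h2 : ((m:ℝ))^2 ≤ n := by
        rw [sq]; exact_mod_cast Nat.sqrt_le n
      exact (Real.le_sqrt (by positivity) hnpos.le).2 h2
    have hsm : Real.sqrt n ≤ 2 * m := by
      have h0 : n < (m+1)*(m+1) := Nat.lt_succ_sqrt n
      have h1 : (n:ℝ) ≤ ((m:ℝ)+1)^2 := by
        have : (n:ℝ) < ((m:ℝ)+1)*((m:ℝ)+1) := by exact_mod_cast h0
        nlinarith
      have h2 : Real.sqrt n ≤ (m:ℝ) + 1 := by
        rw [show (m:ℝ)+1 = Real.sqrt (((m:ℝ)+1)^2) from (Real.sqrt_sq (by positivity)).symm]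
        exact Real.sqrt_le_sqrt h1
      have hm1' : (1:ℝ) ≤ m := by exact_mod_cast hm1
      linarith
    have hmpos : (0:ℝ) < m := by exact_mod_cast hm1
    have hsplit : Finset.Icc 1 n = Finset.Icc 1 m ∪ Finset.Icc (m+1) n := by
      ext x; simp only [Finset.mem_Icc, Finset.mem_union]; omega
    have hdisj : Disjoint (Finset.Icc 1 m) (Finset.Icc (m+1) n) := by
      simp only [Finset.disjoint_left, Finset.mem_Icc]
      intro x h1 h2; omega
    rw [hsplit, Finset.sum_union hdisj]
    have part1 : ∑ j ∈ Finset.Icc 1 m, ((θ + σ^2 * (j:ℝ)^2 / n)^2)⁻¹ ≤ Real.sqrt n / θ^2 := by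
      have hb : ∀ j ∈ Finset.Icc 1 m, ((θ + σ^2 * (j:ℝ)^2 / n)^2)⁻¹ ≤ (θ^2)⁻¹ := by
        intro j _
        apply inv_anti₀ (by positivity)
        have : (0:ℝ) ≤ σ^2 * (j:ℝ)^2 / n := by positivity
        nlinarith
      calc ∑ j ∈ Finset.Icc 1 m, ((θ + σ^2 * (j:ℝ)^2 / n)^2)⁻¹
          ≤ ∑ j ∈ Finset.Icc 1 m, (θ^2)⁻¹ := Finset.sum_le_sum hb
        _ = (m:ℝ) * (θ^2)⁻¹ := by
            rw [Finset.sum_const, Nat.card_Icc]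
            simp [nsmul_eq_mul]
        _ ≤ Real.sqrt n * (θ^2)⁻¹ := by
            apply mul_le_mul_of_nonneg_right hms (by positivity)
        _ = Real.sqrt n / θ^2 := by ring
    have part2 : ∑ j ∈ Finset.Icc (m+1) n, ((θ + σ^2 * (j:ℝ)^2 / n)^2)⁻¹ ≤
        Real.sqrt n / (2*θ*σ^2) := by
      have hb : ∀ j ∈ Finset.Icc (m+1) n, ((θ + σ^2 * (j:ℝ)^2 / n)^2)⁻¹ ≤
          (n:ℝ)/(4*θ*σ^2) * ((1:ℝ)/(j:ℝ)^2) := by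
        intro j hj
        rw [Finset.mem_Icc] at hj
        have hj1 : (1:ℝ) ≤ j := by
          have : 1 ≤ j := by omega
          exact_mod_cast this
        have hjpos : (0:ℝ) < (j:ℝ)^2 := by positivity
        have hAM : 4 * θ * (σ^2 * (j:ℝ)^2 / n) ≤ (θ + σ^2 * (j:ℝ)^2 / n)^2 := by
          nlinarith [sq_nonneg (θ - σ^2 * (j:ℝ)^2 / n)]
        have hpos2 : (0:ℝ) < 4 * θ * (σ^2 * (j:ℝ)^2 / n) := by positivity
        have := inv_anti₀ hpos2 hAM
        calc ((θ + σ^2 * (j:ℝ)^2 / n)^2)⁻¹ ≤ (4 * θ * (σ^2 * (j:ℝ)^2 / n))⁻¹ := this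
          _ = (n:ℝ)/(4*θ*σ^2) * ((1:ℝ)/(j:ℝ)^2) := by
              field_simp
      have htel : ∑ j ∈ Finset.Icc (m+1) n, (1:ℝ)/(j:ℝ)^2 ≤ 1/m - 1/n := tele m hm1 n hmn
      have h1m : (1:ℝ)/m ≤ 2 / Real.sqrt n := by
        rw [div_le_div_iff₀ hmpos hsqrtpos]
        linarith
      calc ∑ j ∈ Finset.Icc (m+1) n, ((θ + σ^2 * (j:ℝ)^2 / n)^2)⁻¹
          ≤ ∑ j ∈ Finset.Icc (m+1) n, (n:ℝ)/(4*θ*σ^2) * ((1:ℝ)/(j:ℝ)^2) :=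
            Finset.sum_le_sum hb
        _ = (n:ℝ)/(4*θ*σ^2) * ∑ j ∈ Finset.Icc (m+1) n, (1:ℝ)/(j:ℝ)^2 := by
            rw [Finset.mul_sum]
        _ ≤ (n:ℝ)/(4*θ*σ^2) * (2 / Real.sqrt n) := by
            apply mul_le_mul_of_nonneg_left _ (by positivity)
            have : (0:ℝ) < (1:ℝ)/n := by positivity
            linarith
        _ = Real.sqrt n / (2*θ*σ^2) := by
            have hss : Real.sqrt n * Real.sqrt n = n := Real.mul_self_sqrt hnpos.le
            rw [div_mul_div_comm, div_eq_div_iff (by positivity) (by positivity)]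
            have h4 : 4*θ*σ^2*(Real.sqrt n * Real.sqrt n) = 4*θ*σ^2*(n:ℝ) := by rw [hss]
            linarith [h4]
    calc ∑ j ∈ Finset.Icc 1 m, ((θ + σ^2 * (j:ℝ)^2 / n)^2)⁻¹ +
          ∑ j ∈ Finset.Icc (m+1) n, ((θ + σ^2 * (j:ℝ)^2 / n)^2)⁻¹
        ≤ Real.sqrt n / θ^2 + Real.sqrt n / (2*θ*σ^2) := add_le_add part1 part2
      _ = K * Real.sqrt n := by rw [hKdef]; ring
  -- cosine notation
  set c : ℕ → ℕ → ℝ := fun i j => Real.cos (2*π*(j:ℝ)*(i:ℝ)/((n:ℝ)+1)) with hcdef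
  set f : ℕ → ℝ := fun i => ∑ j ∈ Finset.Icc 1 n, a j * c i j with hfdef
  set Sa : ℝ := ∑ j ∈ Finset.Icc 1 n, a j with hSadef
  have hI : ∀ i ∈ Finset.Icc 1 n, ∀ j ∈ Finset.Icc 1 n,
      (1 - (n:ℝ) * pMat n i j ^ 2) / (Λ j) ^ (q+1)
        = (1/((n:ℝ)+1)) * a j + ((n:ℝ)/((n:ℝ)+1)) * (a j * c i j) := by
    intro i _ j _
    have hΛne : (Λ j)^(q+1) ≠ 0 := by
      have := hΛpos j
      positivity
    have hs : pMat n i j ^ 2 = (2/((n:ℝ)+1)) * Real.sin ((i:ℝ)*(j:ℝ)*π/((n:ℝ)+1)) ^ 2 := by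
      rw [pMat, mul_pow, Real.sq_sqrt (by positivity)]
    have hsin : Real.sin ((i:ℝ)*(j:ℝ)*π/((n:ℝ)+1)) ^ 2
        = 1/2 - Real.cos (2*((i:ℝ)*(j:ℝ)*π/((n:ℝ)+1)))/2 := Real.sin_sq_eq_half_sub _
    have hcos : Real.cos (2*((i:ℝ)*(j:ℝ)*π/((n:ℝ)+1))) = c i j := by
      simp only [hcdef]
      congr 1
      ring
    rw [div_eq_mul_inv, hs, hsin, hcos]
    simp only [hadef]
    field_simp
    ring
  have hsum_eq : ∀ i ∈ Finset.Icc 1 n,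
      (∑ j ∈ Finset.Icc 1 n, (1 - (n:ℝ)*pMat n i j^2) /
        (θ + 2 * (n:ℝ) * σ^2 * (1 - Real.cos ((j:ℝ) * π / ((n:ℝ)+1))))^(q+1))
        = (1/((n:ℝ)+1)) * Sa + ((n:ℝ)/((n:ℝ)+1)) * f i := by
    intro i hi
    rw [Finset.sum_congr rfl (fun j hj => hI i hi j hj), Finset.sum_add_distrib,
      ← Finset.mul_sum, ← Finset.mul_sum]
  -- orthogonality over a full period
  have orth : ∀ j ∈ Finset.Icc 1 n, ∀ k ∈ Finset.Icc 1 n,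
      ∑ i ∈ Finset.range (n+1), c i j * c i k
        = (if j = k then ((n:ℝ)+1) else 0)/2 + (if k = n+1-j then ((n:ℝ)+1) else 0)/2 := by
    intro j hj k hk
    rw [Finset.mem_Icc] at hj hk
    have hstep : ∀ i : ℕ, c i j * c i k
        = (Real.cos (2*π*((((j:ℤ)-(k:ℤ)):ℤ):ℝ)*(i:ℝ)/(((n+1:ℕ)):ℝ))
           + Real.cos (2*π*((((j:ℤ)+(k:ℤ)):ℤ):ℝ)*(i:ℝ)/(((n+1:ℕ)):ℝ)))/2 := by
      intro i
      simp only [hcdef]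
      rw [cosmul]
      congr 2
      · push_cast; ring
      · push_cast; ring
    have hd1 : (((n+1:ℕ)):ℤ) ∣ ((j:ℤ)-(k:ℤ)) ↔ j = k := by
      constructor
      · rintro ⟨t, ht⟩
        have key : (j:ℤ) - (k:ℤ) = ((n:ℤ)+1)*t := by push_cast at ht ⊢; linarith [ht]
        rcases lt_trichotomy t 0 with h | h | h
        · have h2 := mul_le_mul_of_nonneg_left (show t ≤ -1 by omega)
            (show (0:ℤ) ≤ (n:ℤ)+1 by omega)
          have h3 : (j:ℤ) - (k:ℤ) ≤ -((n:ℤ)+1) := by rw [key]; linarith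
          omega
        · rw [h, mul_zero] at key
          omega
        · have h2 := mul_le_mul_of_nonneg_left (show 1 ≤ t by omega)
            (show (0:ℤ) ≤ (n:ℤ)+1 by omega)
          have h3 : ((n:ℤ)+1) ≤ (j:ℤ) - (k:ℤ) := by rw [key]; linarith
          omega
      · rintro rfl; simp
    have hd2 : (((n+1:ℕ)):ℤ) ∣ ((j:ℤ)+(k:ℤ)) ↔ k = n+1-j := by
      constructor
      · rintro ⟨t, ht⟩
        have key : (j:ℤ) + (k:ℤ) = ((n:ℤ)+1)*t := by push_cast at ht ⊢; linarith [ht]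
        rcases lt_trichotomy t 1 with h | h | h
        · have h2 := mul_le_mul_of_nonneg_left (show t ≤ 0 by omega)
            (show (0:ℤ) ≤ (n:ℤ)+1 by omega)
          have h3 : (j:ℤ) + (k:ℤ) ≤ 0 := by rw [key]; linarith
          omega
        · have h3 : (j:ℤ) + (k:ℤ) = (n:ℤ)+1 := by rw [key, h]; ring
          omega
        · have h2 := mul_le_mul_of_nonneg_left (show 2 ≤ t by omega)
            (show (0:ℤ) ≤ (n:ℤ)+1 by omega)
          have h3 : 2*((n:ℤ)+1) ≤ (j:ℤ) + (k:ℤ) := by rw [key]; linarith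
          omega
      · intro h
        refine ⟨1, ?_⟩
        push_cast
        omega
    calc ∑ i ∈ Finset.range (n+1), c i j * c i k
        = (∑ i ∈ Finset.range (n+1),
            Real.cos (2*π*((((j:ℤ)-(k:ℤ)):ℤ):ℝ)*(i:ℝ)/(((n+1:ℕ)):ℝ))
          + ∑ i ∈ Finset.range (n+1),
            Real.cos (2*π*((((j:ℤ)+(k:ℤ)):ℤ):ℝ)*(i:ℝ)/(((n+1:ℕ)):ℝ)))/2 := by
          rw [Finset.sum_congr rfl (fun i _ => hstep i), ← Finset.sum_div,
            Finset.sum_add_distrib]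
      _ = ((if ((n+1:ℕ):ℤ) ∣ ((j:ℤ)-(k:ℤ)) then (((n+1:ℕ)):ℝ) else 0)
          + (if ((n+1:ℕ):ℤ) ∣ ((j:ℤ)+(k:ℤ)) then (((n+1:ℕ)):ℝ) else 0))/2 := by
          rw [cosSum_s19 (n+1) (by omega) ((j:ℤ)-(k:ℤ)), cosSum_s19 (n+1) (by omega) ((j:ℤ)+(k:ℤ))]
      _ = (if j = k then ((n:ℝ)+1) else 0)/2 + (if k = n+1-j then ((n:ℝ)+1) else 0)/2 := by
          rw [if_congr hd1 rfl rfl, if_congr hd2 rfl rfl]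
          push_cast
          ring
  -- expansion of the square
  have expand : ∑ i ∈ Finset.range (n+1), (f i)^2
      = ∑ j ∈ Finset.Icc 1 n, ∑ k ∈ Finset.Icc 1 n,
          (a j * a k) * ∑ i ∈ Finset.range (n+1), c i j * c i k := by
    have h1 : ∀ i, (f i)^2 = ∑ j ∈ Finset.Icc 1 n, ∑ k ∈ Finset.Icc 1 n,
        (a j * a k) * (c i j * c i k) := by
      intro i
      simp only [hfdef]
      rw [sq, Finset.sum_mul_sum]
      apply Finset.sum_congr rfl; intro j _
      apply Finset.sum_congr rfl; intro k _
      ring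
    rw [Finset.sum_congr rfl (fun i _ => h1 i), Finset.sum_comm]
    apply Finset.sum_congr rfl; intro j _
    rw [Finset.sum_comm]
    apply Finset.sum_congr rfl; intro k _
    rw [← Finset.mul_sum]
  have diag : ∑ j ∈ Finset.Icc 1 n, ∑ k ∈ Finset.Icc 1 n,
      (a j * a k) * ∑ i ∈ Finset.range (n+1), c i j * c i k
      = ∑ j ∈ Finset.Icc 1 n,
          ((a j * a j) * (((n:ℝ)+1)/2) + (a j * a (n+1-j)) * (((n:ℝ)+1)/2)) := by
    apply Finset.sum_congr rfl
    intro j hj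
    have hmem : n+1-j ∈ Finset.Icc 1 n := by
      rw [Finset.mem_Icc] at hj ⊢; omega
    calc ∑ k ∈ Finset.Icc 1 n, (a j * a k) * (∑ i ∈ Finset.range (n+1), c i j * c i k)
        = ∑ k ∈ Finset.Icc 1 n, ((if j = k then (a j * a k) * (((n:ℝ)+1)/2) else 0)
            + (if k = n+1-j then (a j * a k) * (((n:ℝ)+1)/2) else 0)) := by
          apply Finset.sum_congr rfl
          intro k hk
          rw [orth j hj k hk]
          split_ifs with h1 h2 <;> ring
      _ = (a j * a j) * (((n:ℝ)+1)/2) + (a j * a (n+1-j)) * (((n:ℝ)+1)/2) := by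
          rw [Finset.sum_add_distrib,
            Finset.sum_ite_eq (Finset.Icc 1 n) j (fun k => (a j * a k) * (((n:ℝ)+1)/2)),
            Finset.sum_ite_eq' (Finset.Icc 1 n) (n+1-j) (fun k => (a j * a k) * (((n:ℝ)+1)/2)),
            if_pos hj, if_pos hmem]
  have hinv : ∑ j ∈ Finset.Icc 1 n, a (n+1-j) ^ 2 = ∑ j ∈ Finset.Icc 1 n, a j ^ 2 := by
    apply Finset.sum_nbij' (fun j => n+1-j) (fun j => n+1-j) <;>
      intros x hx <;> simp only [Finset.mem_Icc] at * <;> first | omega | rfl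
  have hcross : ∑ j ∈ Finset.Icc 1 n, a j * a (n+1-j) ≤ ∑ j ∈ Finset.Icc 1 n, a j^2 := by
    have h1 : ∀ j ∈ Finset.Icc 1 n, a j * a (n+1-j) ≤ (a j^2 + a (n+1-j)^2)/2 := by
      intro j _
      nlinarith [sq_nonneg (a j - a (n+1-j))]
    calc ∑ j ∈ Finset.Icc 1 n, a j * a (n+1-j)
        ≤ ∑ j ∈ Finset.Icc 1 n, (a j^2 + a (n+1-j)^2)/2 := Finset.sum_le_sum h1
      _ = (∑ j ∈ Finset.Icc 1 n, a j^2 + ∑ j ∈ Finset.Icc 1 n, a (n+1-j)^2)/2 := by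
          rw [← Finset.sum_div, Finset.sum_add_distrib]
      _ = ∑ j ∈ Finset.Icc 1 n, a j^2 := by rw [hinv]; ring
  have hf2 : ∑ i ∈ Finset.Icc 1 n, (f i)^2 ≤ ((n:ℝ)+1) * ∑ j ∈ Finset.Icc 1 n, (a j)^2 := by
    have step1 : ∑ i ∈ Finset.Icc 1 n, (f i)^2 ≤ ∑ i ∈ Finset.range (n+1), (f i)^2 :=
      Finset.sum_le_sum_of_subset_of_nonneg
        (fun x hx => by rw [Finset.mem_Icc] at hx; exact Finset.mem_range.2 (by omega))
        (fun i _ _ => sq_nonneg _)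
    have hAcc : (0:ℝ) ≤ ((n:ℝ)+1)/2 := by positivity
    calc ∑ i ∈ Finset.Icc 1 n, (f i)^2 ≤ ∑ i ∈ Finset.range (n+1), (f i)^2 := step1
      _ = ∑ j ∈ Finset.Icc 1 n,
          ((a j * a j) * (((n:ℝ)+1)/2) + (a j * a (n+1-j)) * (((n:ℝ)+1)/2)) := by
          rw [expand, diag]
      _ = ((n:ℝ)+1)/2 * ∑ j ∈ Finset.Icc 1 n, a j^2
          + ((n:ℝ)+1)/2 * ∑ j ∈ Finset.Icc 1 n, a j * a (n+1-j) := by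
          rw [Finset.sum_add_distrib, Finset.mul_sum, Finset.mul_sum]
          congr 1
          · apply Finset.sum_congr rfl; intros; ring
          · apply Finset.sum_congr rfl; intros; ring
      _ ≤ ((n:ℝ)+1)/2 * ∑ j ∈ Finset.Icc 1 n, a j^2
          + ((n:ℝ)+1)/2 * ∑ j ∈ Finset.Icc 1 n, a j^2 := by
          have := mul_le_mul_of_nonneg_left hcross hAcc
          linarith
      _ = ((n:ℝ)+1) * ∑ j ∈ Finset.Icc 1 n, (a j)^2 := by ring
  have ha2sum : ∑ j ∈ Finset.Icc 1 n, (a j)^2 ≤ (θ^(2*q))⁻¹ * (K * Real.sqrt n) := by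
    have hb : ∀ j ∈ Finset.Icc 1 n, (a j)^2 ≤ (θ^(2*q))⁻¹ * ((θ + σ^2*(j:ℝ)^2/n)^2)⁻¹ := by
      intro j hj
      have hq' := hquad j hj
      have hΛj := hΛpos j
      have hbase : (0:ℝ) < θ + σ^2*(j:ℝ)^2/n := by positivity
      have e1 : (a j)^2 = ((Λ j)^(2*q) * (Λ j)^2)⁻¹ := by
        simp only [hadef]
        have he : (q+1)*2 = 2*q+2 := by ring
        rw [inv_pow, ← pow_mul, he, pow_add]
      rw [e1, ← mul_inv]
      apply inv_anti₀ (by positivity)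
      apply mul_le_mul (pow_le_pow_left₀ hθ.le (hΛθ j) _) (pow_le_pow_left₀ hbase.le hq' 2)
        (by positivity) (by positivity)
    calc ∑ j ∈ Finset.Icc 1 n, (a j)^2
        ≤ ∑ j ∈ Finset.Icc 1 n, (θ^(2*q))⁻¹ * ((θ + σ^2*(j:ℝ)^2/n)^2)⁻¹ :=
          Finset.sum_le_sum hb
      _ = (θ^(2*q))⁻¹ * ∑ j ∈ Finset.Icc 1 n, ((θ + σ^2*(j:ℝ)^2/n)^2)⁻¹ := by
          rw [Finset.mul_sum]
      _ ≤ (θ^(2*q))⁻¹ * (K * Real.sqrt n) :=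
          mul_le_mul_of_nonneg_left S2 (by positivity)
  have hSa : Sa ≤ (n:ℝ) * (θ^(q+1))⁻¹ := by
    calc Sa ≤ ∑ j ∈ Finset.Icc 1 n, (θ^(q+1))⁻¹ := Finset.sum_le_sum (fun j _ => ha_le j)
      _ = (n:ℝ) * (θ^(q+1))⁻¹ := by
          rw [Finset.sum_const, Nat.card_Icc]
          simp [nsmul_eq_mul]
  have hSapos : 0 ≤ Sa := Finset.sum_nonneg (fun j _ => (hapos j).le)
  have hterm : ∀ i ∈ Finset.Icc 1 n, ((1/((n:ℝ)+1))*Sa + ((n:ℝ)/((n:ℝ)+1))*f i)^2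
      ≤ 2*((θ^(q+1))⁻¹)^2 + 2*(f i)^2 := by
    intro i _
    have ht0 : (0:ℝ) ≤ (θ^(q+1))⁻¹ := by positivity
    have hfrac : (n:ℝ)/((n:ℝ)+1) ≤ 1 := by rw [div_le_one hNpos]; linarith
    have hfrac0 : (0:ℝ) ≤ (n:ℝ)/((n:ℝ)+1) := by positivity
    have h1 : (1/((n:ℝ)+1))*Sa ≤ (θ^(q+1))⁻¹ := by
      have h2 := mul_le_mul_of_nonneg_left hSa
        (show (0:ℝ) ≤ 1/((n:ℝ)+1) by positivity)
      have h3 : (1/((n:ℝ)+1)) * ((n:ℝ) * (θ^(q+1))⁻¹) ≤ (θ^(q+1))⁻¹ := by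
        rw [show (1/((n:ℝ)+1)) * ((n:ℝ) * (θ^(q+1))⁻¹) = ((n:ℝ)/((n:ℝ)+1)) * (θ^(q+1))⁻¹
          by ring]
        nlinarith
      linarith
    have h0 : 0 ≤ (1/((n:ℝ)+1))*Sa := mul_nonneg (by positivity) hSapos
    have hc2 : ((n:ℝ)/((n:ℝ)+1))^2 ≤ 1 := by nlinarith
    nlinarith [sq_nonneg ((1/((n:ℝ)+1))*Sa - ((n:ℝ)/((n:ℝ)+1))*f i), sq_nonneg (f i),
      mul_self_le_mul_self h0 h1, mul_nonneg (sub_nonneg.2 hc2) (sq_nonneg (f i))]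
  have hpow : (n:ℝ) ^ ((3:ℝ)/2) = (n:ℝ) * Real.sqrt n := by
    rw [show (3:ℝ)/2 = 1 + 1/2 by norm_num, Real.rpow_add hnpos, Real.rpow_one,
      ← Real.sqrt_eq_rpow]
  calc ∑ i ∈ Finset.Icc 1 n,
        (∑ j ∈ Finset.Icc 1 n, (1 - (n:ℝ)*pMat n i j^2) /
          (θ + 2 * (n:ℝ) * σ^2 * (1 - Real.cos ((j:ℝ) * π / ((n:ℝ)+1))))^(q+1))^2
      = ∑ i ∈ Finset.Icc 1 n, ((1/((n:ℝ)+1))*Sa + ((n:ℝ)/((n:ℝ)+1))*f i)^2 := by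
        apply Finset.sum_congr rfl
        intro i hi
        rw [hsum_eq i hi]
    _ ≤ ∑ i ∈ Finset.Icc 1 n, (2*((θ^(q+1))⁻¹)^2 + 2*(f i)^2) := Finset.sum_le_sum hterm
    _ = (n:ℝ) * (2*((θ^(q+1))⁻¹)^2) + 2 * ∑ i ∈ Finset.Icc 1 n, (f i)^2 := by
        rw [Finset.sum_add_distrib, Finset.sum_const, Nat.card_Icc, ← Finset.mul_sum]
        simp [nsmul_eq_mul]
    _ ≤ (n:ℝ) * (2*((θ^(q+1))⁻¹)^2)
        + 2 * (((n:ℝ)+1) * ((θ^(2*q))⁻¹ * (K * Real.sqrt n))) := by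
        have h5 := hf2.trans (mul_le_mul_of_nonneg_left ha2sum (by positivity))
        linarith
    _ ≤ (2*((θ^(q+1))⁻¹)^2 + 4*K*(θ^(2*q))⁻¹) * ((n:ℝ) ^ ((3:ℝ)/2)) := by
        rw [hpow]
        have ht0 : (0:ℝ) ≤ ((θ^(q+1))⁻¹)^2 := by positivity
        have hs0 : (0:ℝ) ≤ (θ^(2*q))⁻¹ := by positivity
        have h7 : (n:ℝ) ≤ (n:ℝ)*Real.sqrt n := by nlinarith
        have e1 : (n:ℝ) * (2*((θ^(q+1))⁻¹)^2) ≤ 2*((θ^(q+1))⁻¹)^2 * ((n:ℝ) * Real.sqrt n) := by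
          nlinarith [mul_le_mul_of_nonneg_left h7
            (show (0:ℝ) ≤ 2*((θ^(q+1))⁻¹)^2 by positivity)]
        have e2 : 2 * (((n:ℝ)+1) * ((θ^(2*q))⁻¹ * (K * Real.sqrt n)))
            ≤ 4*K*(θ^(2*q))⁻¹ * ((n:ℝ) * Real.sqrt n) := by
          have h6 : ((n:ℝ)+1) ≤ 2*(n:ℝ) := by linarith
          nlinarith [mul_nonneg (mul_nonneg hs0 hKpos.le) hsqrtpos.le]
        linarith



end PaperBvM
end
end
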